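/- arXiv:2309.01986 — 7 statements merged into one kernel-verified Lean document; each statement's English description precedes it below -/
import Mathlib

section
/- Let μ be a regular uncountable cardinal and X a set with |X| ≥ μ. A set C ⊆ [X]^{<μ} contains a club subset of [X]^{<μ} if and only if there exists a function f : [X]^{<ω} → [X]^{<μ} such that every x ∈ [X]^{<μ} that is closed under f belongs to C. -/
/-!
Given a club `D`, choose for every finite `s` a set `F s ∈ D` containing `s` and all `F t` with
`t ⊂ s`. Then `F` is monotone, and a set `x` closed under `F` is the directed union of the `F s`
over finite `s ⊆ x`. Such unions stay in `D`: enumerating `x` in order type `|x|.ord` writes the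
union as the union of a chain of length `|x| < μ` of the unions over shorter initial segments,
which lie in `D` by induction on `|x|`.

Conversely, the sets of size `< μ` closed under `f` form a club: closing `y` under `f` in `ω`
steps keeps its size below `μ` since `μ` is regular and uncountable, and a finite subset of the
union of a chain already lies in one of its members.
-/

open Cardinal Set

universe u

/-- `C` is club in `[X]^{<μ}`: every element has size `< μ`, every set of size `< μ`
is contained in an element of `C`, and `C` is closed under unions of ⊆-increasing
chains of length `< μ` (indexed by a nonzero ordinal of cardinality `< μ`). -/
def IsClubSet {X : Type u} (μ : Cardinal.{u}) (C : Set (Set X)) : Prop :=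
  (∀ c ∈ C, #c < μ) ∧
  (∀ y : Set X, #y < μ → ∃ c ∈ C, y ⊆ c) ∧
  (∀ (δ : Ordinal.{u}) (c : Ordinal.{u} → Set X), δ ≠ 0 → δ.card < μ →
    (∀ β < δ, c β ∈ C) → (∀ β γ, β ≤ γ → γ < δ → c β ⊆ c γ) →
    (⋃ β ∈ Set.Iio δ, c β) ∈ C)

/-- `x` is closed under `f : [X]^{<ω} → [X]^{<μ}`: for every finite `s ⊆ x`, `f s ⊆ x`. -/
def ClosedUnderF {X : Type u} (f : Finset X → Set X) (x : Set X) : Prop :=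
  ∀ s : Finset X, ↑s ⊆ x → f s ⊆ x

universe v

namespace Cardinal

theorem mk_iUnion_lt_of_isRegular {α : Type u} {ι : Type v} {f : ι → Set α} {c : Cardinal.{u}}
    (hc : c.IsRegular) (hι : lift.{u} #ι < lift.{v} c) (hf : ∀ i, #(f i) < c) :
    #(⋃ i, f i) < c := by
  refine lift_lt.{u, v}.1 ((mk_iUnion_le_lift f).trans_lt ?_)
  refine mul_lt_of_lt hc.lift.aleph0_le hι (lift_iSup_lt_of_lt_cof_ord ?_ fun i => lift_lt.2 (hf i))
  rwa [lift_id'.{v, u}, hc.lift.cof_ord, lift_umax.{v, u}]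

theorem mk_biUnion_lt_of_isRegular {α : Type u} {ι : Type v} {f : ι → Set α} {t : Set ι}
    {c : Cardinal.{u}} (hc : c.IsRegular) (ht : lift.{u} #t < lift.{v} c)
    (hf : ∀ i ∈ t, #(f i) < c) : #(⋃ i ∈ t, f i) < c := by
  rw [biUnion_eq_iUnion]
  exact mk_iUnion_lt_of_isRegular hc ht fun i => hf i i.2

theorem mk_setOf_finset_subset_lt {α : Type u} {c : Cardinal.{u}} (hc : ℵ₀ ≤ c) {x : Set α}
    (hx : #x < c) : #{s : Finset α | ↑s ⊆ x} < c := by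
  classical
  have hsurj : {s : Finset α | ↑s ⊆ x} ⊆ range fun t : Finset x => t.map (.subtype _) :=
    fun s hs => ⟨s.subtype (· ∈ x), Finset.subtype_map_of_mem hs⟩
  refine (mk_le_mk_of_subset hsurj).trans_lt (mk_range_le.trans_lt ?_)
  rcases finite_or_infinite x with hfin | hinf
  · exact (lt_aleph0_of_finite _).trans_le hc
  · rwa [mk_finset_of_infinite]

end Cardinal

theorem exists_lt_subset_of_finset_subset_biUnion_Iio {α ι : Type*} [LinearOrder ι] {δ : ι}
    (hδ : (Iio δ).Nonempty) {c : ι → Set α} (hc : ∀ β γ, β ≤ γ → γ < δ → c β ⊆ c γ)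
    {s : Finset α} (hs : ↑s ⊆ ⋃ β ∈ Iio δ, c β) : ∃ β < δ, ↑s ⊆ c β :=
  DirectedOn.exists_mem_subset_of_finset_subset_biUnion hδ (fun β hβ γ hγ =>
    ⟨max β γ, max_lt hβ hγ, hc _ _ (le_max_left β γ) (max_lt hβ hγ),
      hc _ _ (le_max_right β γ) (max_lt hβ hγ)⟩) hs

theorem Set.Infinite.exists_monotone_biUnion_ord_eq {α : Type u} {y : Set α} (hy : y.Infinite) :
    ∃ Y : Ordinal.{u} → Set α, Monotone Y ∧ (∀ β < (#y).ord, #(Y β) < #y) ∧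
      ⋃ β ∈ Iio (#y).ord, Y β = y := by
  obtain ⟨r, _, hr⟩ := Cardinal.exists_ord_eq y
  refine ⟨fun β => Subtype.val '' (Ordinal.typein r ⁻¹' Iio β), ?_, ?_, ?_⟩
  · exact fun β γ hβγ => image_mono (preimage_mono (Iio_subset_Iio hβγ))
  · intro β hβ
    obtain ⟨a, rfl⟩ := Ordinal.typein_surj r (hr ▸ hβ)
    calc #(Subtype.val '' (Ordinal.typein r ⁻¹' Iio (Ordinal.typein r a)))
        ≤ #(Ordinal.typein r ⁻¹' Iio (Ordinal.typein r a)) := mk_image_le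
      _ = (Ordinal.typein r a).card := by
        simp only [preimage, mem_Iio, Ordinal.typein_lt_typein, Ordinal.card_typein]; rfl
      _ < #y := card_typein_lt a hr
  · refine Subset.antisymm (iUnion₂_subset fun β _ => by simp) fun a ha => ?_
    have hlim : Order.IsSuccLimit (#y).ord := isSuccLimit_ord (infinite_iff.1 hy.to_subtype)
    have hlt : Ordinal.typein r ⟨a, ha⟩ < (#y).ord := hr ▸ Ordinal.typein_lt_type r _
    exact mem_biUnion (hlim.succ_lt hlt) ⟨⟨a, ha⟩, Order.lt_succ (Ordinal.typein r ⟨a, ha⟩), rfl⟩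

section

variable {X : Type u} {μ : Cardinal.{u}} {D : Set (Set X)}

def IsChainClosed (μ : Cardinal.{u}) (D : Set (Set X)) : Prop :=
  ∀ (δ : Ordinal.{u}) (c : Ordinal.{u} → Set X), δ ≠ 0 → δ.card < μ →
    (∀ β < δ, c β ∈ D) → (∀ β γ, β ≤ γ → γ < δ → c β ⊆ c γ) →
    (⋃ β ∈ Set.Iio δ, c β) ∈ D

theorem IsClubSet.isChainClosed (hD : IsClubSet μ D) : IsChainClosed μ D := hD.2.2

theorem Set.Finite.iUnion_finset_subset_eq {y : Set X} (hy : y.Finite) {F : Finset X → Set X}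
    (hF : Monotone F) : ⋃ (s : Finset X) (_ : ↑s ⊆ y), F s = F hy.toFinset :=
  Subset.antisymm (iUnion₂_subset fun _ hs => hF fun _ ha => hy.mem_toFinset.2 (hs ha))
    (subset_iUnion₂_of_subset hy.toFinset (by simp) subset_rfl)

theorem IsChainClosed.iUnion_finset_subset_mem (hD : IsChainClosed μ D) {F : Finset X → Set X}
    (hF : Monotone F) {y : Set X} (hy : #y < μ) (hFD : ∀ s : Finset X, ↑s ⊆ y → F s ∈ D) :
    ⋃ (s : Finset X) (_ : ↑s ⊆ y), F s ∈ D := by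
  obtain ⟨κ, hκ⟩ : ∃ κ, #y = κ := ⟨_, rfl⟩
  induction κ using WellFoundedLT.induction generalizing y with
  | ind κ ih =>
  rcases y.finite_or_infinite with hfin | hinf
  · rw [hfin.iUnion_finset_subset_eq hF]
    exact hFD _ (by simp)
  obtain ⟨Y, hYmono, hYcard, hYunion⟩ := hinf.exists_monotone_biUnion_ord_eq
  have hδ : (#y).ord ≠ 0 := Cardinal.ord_eq_zero.not.2 (mk_ne_zero_iff.2 hinf.nonempty.to_subtype)
  have hYsub : ∀ β < (#y).ord, Y β ⊆ y := fun β hβ => hYunion ▸ subset_biUnion_of_mem hβ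
  set c : Ordinal.{u} → Set X := fun β => ⋃ (s : Finset X) (_ : ↑s ⊆ Y β), F s
  have hcD : ∀ β < (#y).ord, c β ∈ D := fun β hβ =>
    ih _ (hκ ▸ hYcard β hβ) ((hYcard β hβ).trans hy) (fun s hs => hFD s (hs.trans (hYsub β hβ)))
      rfl
  have hcmono : ∀ β γ, β ≤ γ → γ < (#y).ord → c β ⊆ c γ := fun β γ hβγ _ =>
    iUnion₂_mono' fun s hs => ⟨s, hs.trans (hYmono hβγ), subset_rfl⟩
  have hunion : ⋃ β ∈ Set.Iio (#y).ord, c β = ⋃ (s : Finset X) (_ : ↑s ⊆ y), F s := by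
    refine Subset.antisymm (iUnion₂_subset fun β hβ => ?_) (iUnion₂_subset fun s hs => ?_)
    · exact iUnion₂_mono' fun s hs => ⟨s, hs.trans (hYsub β hβ), subset_rfl⟩
    · obtain ⟨β, hβ, hsβ⟩ := exists_lt_subset_of_finset_subset_biUnion_Iio
        ⟨0, pos_iff_ne_zero.2 hδ⟩ (fun β γ hβγ _ => hYmono hβγ) (hYunion.symm ▸ hs)
      exact (subset_iUnion₂_of_subset s hsβ subset_rfl).trans (subset_biUnion_of_mem (u := c) hβ)
  rw [← hunion]
  exact hD _ c hδ (by rwa [Cardinal.card_ord]) hcD hcmono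

theorem ClosedUnderF.eq_iUnion_finset_subset {F : Finset X → Set X} (hF : ∀ s, ↑s ⊆ F s)
    {x : Set X} (hx : ClosedUnderF F x) : x = ⋃ (s : Finset X) (_ : ↑s ⊆ x), F s :=
  Subset.antisymm (fun a ha => mem_iUnion₂.2 ⟨{a}, by simpa using ha, hF {a} (by simp)⟩)
    (iUnion₂_subset hx)

noncomputable def monotoneHull (g : Set X → Set X) : Finset X → Set X :=
  Finset.strongInduction fun s hull => g (↑s ∪ ⋃ (t : Finset X) (ht : t ⊂ s), hull t ht)

theorem monotoneHull_eq (g : Set X → Set X) (s : Finset X) :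
    monotoneHull g s = g (↑s ∪ ⋃ (t : Finset X) (_ : t ⊂ s), monotoneHull g t) :=
  Finset.strongInduction_eq _ _

theorem IsClubSet.exists_monotone_mem (hreg : μ.IsRegular) (hD : IsClubSet μ D) :
    ∃ F : Finset X → Set X, Monotone F ∧ (∀ s, ↑s ⊆ F s) ∧ ∀ s, F s ∈ D := by
  choose! g hgD hgsub using hD.2.1
  have hsmall : ∀ s : Finset X, (∀ t ⊂ s, monotoneHull g t ∈ D) →
      #(↑s ∪ ⋃ (t : Finset X) (_ : t ⊂ s), monotoneHull g t : Set X) < μ := by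
    intro s hs
    refine (mk_union_le _ _).trans_lt (add_lt_of_lt hreg.aleph0_le
      (s.finite_toSet.lt_aleph0.trans_le hreg.aleph0_le) ?_)
    refine mk_biUnion_lt_of_isRegular (t := {t | t ⊂ s}) hreg ?_ fun t ht => hD.1 _ (hs t ht)
    have hfin : {t | t ⊂ s}.Finite := s.powerset.finite_toSet.subset fun t ht => by simpa using ht.1
    simpa using hfin.lt_aleph0.trans_le hreg.aleph0_le
  have hmem : ∀ s, monotoneHull g s ∈ D := fun s => by
    induction s using Finset.strongInduction with
    | H s ih => rw [monotoneHull_eq]; exact hgD _ (hsmall s ih)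
  have hsub : ∀ s, ↑s ∪ ⋃ (t : Finset X) (_ : t ⊂ s), monotoneHull g t ⊆ monotoneHull g s :=
    fun s => by rw [monotoneHull_eq g s]; exact hgsub _ (hsmall s fun t _ => hmem t)
  refine ⟨monotoneHull g, fun t s hts => ?_, fun s => subset_union_left.trans (hsub s), hmem⟩
  rcases eq_or_ssubset_of_subset hts with rfl | hts
  · rfl
  · exact (subset_iUnion₂ (s := fun t (_ : t ⊂ s) => monotoneHull g t) t hts).trans
      (subset_union_right.trans (hsub s))

def adjoinImages (f : Finset X → Set X) (x : Set X) : Set X :=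
  x ∪ ⋃ (s : Finset X) (_ : ↑s ⊆ x), f s

theorem subset_adjoinImages (f : Finset X → Set X) (x : Set X) : x ⊆ adjoinImages f x :=
  subset_union_left

theorem subset_adjoinImages_of_subset {f : Finset X → Set X} {x : Set X} {s : Finset X}
    (hs : ↑s ⊆ x) : f s ⊆ adjoinImages f x :=
  (subset_iUnion₂_of_subset (t := fun s (_ : ↑s ⊆ x) => f s) s hs subset_rfl).trans
    subset_union_right

theorem mk_adjoinImages_lt (hreg : μ.IsRegular) {f : Finset X → Set X}
    (hf : ∀ s, #(f s) < μ) {x : Set X} (hx : #x < μ) : #(adjoinImages f x) < μ := by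
  have himages : #(⋃ s ∈ {s : Finset X | ↑s ⊆ x}, f s) < μ :=
    mk_biUnion_lt_of_isRegular hreg
      (by rw [lift_id, lift_id]; exact mk_setOf_finset_subset_lt hreg.aleph0_le hx) fun s _ => hf s
  exact (mk_union_le _ _).trans_lt (add_lt_of_lt hreg.aleph0_le hx himages)

theorem exists_superset_closedUnderF (hreg : μ.IsRegular) (hunc : ℵ₀ < μ)
    {f : Finset X → Set X} (hf : ∀ s, #(f s) < μ) {y : Set X} (hy : #y < μ) :
    ∃ x, y ⊆ x ∧ #x < μ ∧ ClosedUnderF f x := by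
  have hz_succ : ∀ n, (adjoinImages f)^[n + 1] y = adjoinImages f ((adjoinImages f)^[n] y) :=
    fun n => Function.iterate_succ_apply' _ n y
  have hz : ∀ n, #((adjoinImages f)^[n] y) < μ := fun n => by
    induction n with
    | zero => exact hy
    | succ n ih => rw [hz_succ]; exact mk_adjoinImages_lt hreg hf ih
  have hzmono : Monotone fun n => (adjoinImages f)^[n] y :=
    monotone_nat_of_le_succ fun n => (hz_succ n).symm ▸ subset_adjoinImages f _
  refine ⟨⋃ n, (adjoinImages f)^[n] y, subset_iUnion (fun n => (adjoinImages f)^[n] y) 0,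
    mk_iUnion_lt_of_isRegular hreg (by simpa using hunc) hz, fun s hs => ?_⟩
  obtain ⟨n, hn⟩ := hzmono.directed_le.exists_mem_subset_of_finset_subset_biUnion hs
  calc f s ⊆ adjoinImages f ((adjoinImages f)^[n] y) := subset_adjoinImages_of_subset hn
    _ = (adjoinImages f)^[n + 1] y := (hz_succ n).symm
    _ ⊆ ⋃ n, (adjoinImages f)^[n] y := subset_iUnion (fun n => (adjoinImages f)^[n] y) (n + 1)

theorem isChainClosed_setOf_closedUnderF (hreg : μ.IsRegular) (f : Finset X → Set X) :
    IsChainClosed μ {x | #x < μ ∧ ClosedUnderF f x} := by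
  intro δ c hδ hδμ hc hcmono
  refine ⟨mk_biUnion_lt_of_isRegular hreg ?_ fun β hβ => (hc β hβ).1, fun s hs => ?_⟩
  · rwa [mk_Iio_ordinal, lift_lift, lift_lt]
  · obtain ⟨β, hβ, hsβ⟩ :=
      exists_lt_subset_of_finset_subset_biUnion_Iio ⟨0, pos_iff_ne_zero.2 hδ⟩ hcmono hs
    exact ((hc β hβ).2 s hsβ).trans (subset_biUnion_of_mem (u := c) hβ)

theorem isClubSet_setOf_closedUnderF (hreg : μ.IsRegular) (hunc : ℵ₀ < μ)
    {f : Finset X → Set X} (hf : ∀ s, #(f s) < μ) :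
    IsClubSet μ {x | #x < μ ∧ ClosedUnderF f x} := by
  refine ⟨fun _ hx => hx.1, fun y hy => ?_, isChainClosed_setOf_closedUnderF hreg f⟩
  obtain ⟨x, hyx, hx, hxf⟩ := exists_superset_closedUnderF hreg hunc hf hy
  exact ⟨x, ⟨hx, hxf⟩, hyx⟩

end

theorem contains_club_iff_exists_fn_general {X : Type u} (μ : Cardinal.{u})
    (hreg : μ.IsRegular) (hunc : ℵ₀ < μ)
    (C : Set (Set X)) :
    (∃ D : Set (Set X), IsClubSet μ D ∧ D ⊆ C) ↔
      ∃ f : Finset X → Set X, (∀ s, #(f s) < μ) ∧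
        ∀ x : Set X, #x < μ → ClosedUnderF f x → x ∈ C := by
  constructor
  · rintro ⟨D, hD, hDC⟩
    obtain ⟨F, hFmono, hFsub, hFD⟩ := hD.exists_monotone_mem hreg
    refine ⟨F, fun s => hD.1 _ (hFD s), fun x hx hxF => hDC ?_⟩
    rw [hxF.eq_iUnion_finset_subset hFsub]
    exact hD.isChainClosed.iUnion_finset_subset_mem hFmono hx fun s _ => hFD s
  · rintro ⟨f, hf, hfC⟩
    exact ⟨_, isClubSet_setOf_closedUnderF hreg hunc hf, fun x hx => hfC x hx.1 hx.2⟩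

/-- Menas' characterization: a set `C ⊆ [X]^{<μ}` contains a club subset of `[X]^{<μ}`
iff there is `f : [X]^{<ω} → [X]^{<μ}` such that every `x ∈ [X]^{<μ}` closed under `f`
belongs to `C`. -/
theorem contains_club_iff_exists_fn {X : Type u} (μ : Cardinal.{u})
    (hreg : μ.IsRegular) (hunc : ℵ₀ < μ) (hX : μ ≤ #X)
    (C : Set (Set X)) (hC : ∀ x ∈ C, #x < μ) :
    (∃ D : Set (Set X), IsClubSet μ D ∧ D ⊆ C) ↔
      ∃ f : Finset X → Set X, (∀ s, #(f s) < μ) ∧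
        ∀ x : Set X, #x < μ → ClosedUnderF f x → x ∈ C :=
  contains_club_iff_exists_fn_general μ hreg hunc C
end

section
/- Let (P, ≤) be a partial order and κ a cardinal. If P is strongly <κ-distributive, then for every p ∈ P and every sequence (A_α)_{α<κ} of maximal antichains below p such that A_α refines A_β whenever β < α < κ, there exists a descending sequence (p_α)_{α<κ} with p_0 ≤ p and p_α ∈ A_α for every α < κ. -/
universe u v

/-- `D` is open (downward closed) and dense in the partial order `P`. -/
def OpenDense {P : Type u} [Preorder P] (D : Set P) : Prop :=
  (∀ p ∈ D, ∀ q, q ≤ p → q ∈ D) ∧ ∀ p : P, ∃ q, q ≤ p ∧ q ∈ D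

/-- `P` is strongly `<κ`-distributive: for every `κ`-sequence of open dense sets and
every `p` there is a descending sequence (a thread) below `p` meeting them in order. -/
def StronglyDistrib (κ : Cardinal.{v}) (P : Type u) [Preorder P] : Prop :=
  ∀ D : Ordinal.{v} → Set P, (∀ α < κ.ord, OpenDense (D α)) → ∀ p : P,
    ∃ f : Ordinal.{v} → P, f 0 ≤ p ∧
      (∀ β α, β ≤ α → α < κ.ord → f α ≤ f β) ∧
      ∀ α < κ.ord, f α ∈ D α

/-- `P` is `<κ`-distributive: intersections of fewer than `κ` open dense sets are dense. -/
def DistribLt (κ : Cardinal.{v}) (P : Type u) [Preorder P] : Prop :=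
  ∀ γ < κ.ord, ∀ D : Ordinal.{v} → Set P, (∀ α < γ, OpenDense (D α)) →
    ∀ p : P, ∃ q, q ≤ p ∧ ∀ α < γ, q ∈ D α

/-- Two conditions are compatible if they have a common lower bound. -/
def Compat {P : Type u} [Preorder P] (p q : P) : Prop := ∃ r, r ≤ p ∧ r ≤ q

/-- An antichain: a set of pairwise incompatible conditions. -/
def IsAntichainIncompat {P : Type u} [Preorder P] (A : Set P) : Prop :=
  ∀ p ∈ A, ∀ q ∈ A, p ≠ q → ¬Compat p q

/-- `A` is a maximal antichain below `p`. -/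
def MaxAntichainBelow {P : Type u} [Preorder P] (p : P) (A : Set P) : Prop :=
  IsAntichainIncompat A ∧ (∀ a ∈ A, a ≤ p) ∧ ∀ q, q ≤ p → ∃ a ∈ A, Compat q a

/-- `A` refines `B`: every element of `A` lies below an element of `B`. -/
def Refines {P : Type u} [Preorder P] (A B : Set P) : Prop :=
  ∀ a ∈ A, ∃ b ∈ B, a ≤ b

/-!
Threading the open dense sets `D_α = ↓A_α ∪ {q | q incompatible with p}` gives a descending
`(q_α)` below `p`; each `q_α` lies below a unique `a_α ∈ A_α`. For `β < α`, `a_α` lies below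
some element of `A_β` which is compatible with `a_β` (both are above `q_α`), hence equal to it,
so `(a_α)` is descending.
-/

section Antichains

variable {P : Type u} [Preorder P]

theorem IsAntichainIncompat.eq_of_compat {A : Set P} (hA : IsAntichainIncompat A) {a b : P}
    (ha : a ∈ A) (hb : b ∈ A) (hab : Compat a b) : a = b := by
  by_contra hne
  exact hA a ha b hb hne hab

theorem Refines.le_of_compat {A B : Set P} (hAB : Refines A B) (hB : IsAntichainIncompat B)
    {a b : P} (ha : a ∈ A) (hb : b ∈ B) (hab : Compat a b) : a ≤ b := by
  obtain ⟨b', hb', hab'⟩ := hAB a ha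
  obtain ⟨r, hra, hrb⟩ := hab
  obtain rfl : b' = b := hB.eq_of_compat hb' hb ⟨r, hra.trans hab', hrb⟩
  exact hab'

-- The second part makes the set dense everywhere, not only below `p`.
theorem MaxAntichainBelow.openDense_lowerClosure_union {p : P} {A : Set P}
    (hA : MaxAntichainBelow p A) : OpenDense ((lowerClosure A : Set P) ∪ {q | ¬Compat q p}) := by
  constructor
  · rintro q (⟨a, ha, hqa⟩ | hq) r hrq
    · exact Or.inl ⟨a, ha, hrq.trans hqa⟩
    · exact Or.inr fun ⟨s, hsr, hsp⟩ => hq ⟨s, hsr.trans hrq, hsp⟩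
  · intro r
    by_cases hrp : Compat r p
    · obtain ⟨s, hsr, hsp⟩ := hrp
      obtain ⟨a, ha, t, hts, hta⟩ := hA.2.2 s hsp
      exact ⟨t, hts.trans hsr, Or.inl ⟨a, ha, hta⟩⟩
    · exact ⟨r, le_rfl, Or.inr hrp⟩

theorem exists_ge_of_mem_lowerClosure_union {p q : P} {A : Set P}
    (hqp : q ≤ p) (hq : q ∈ (lowerClosure A : Set P) ∪ {q | ¬Compat q p}) :
    ∃ a ∈ A, q ≤ a :=
  hq.resolve_right fun hqp' => hqp' ⟨q, le_rfl, hqp⟩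

end Antichains

/-- If `P` is strongly `<κ`-distributive, then every refining `κ`-sequence of maximal
antichains below `p` admits a descending sequence selecting one element from each. -/
theorem thread_through_antichains {P : Type u} [PartialOrder P] (κ : Cardinal.{v})
    (h : StronglyDistrib κ P) (p : P) (A : Ordinal.{v} → Set P)
    (hmax : ∀ α < κ.ord, MaxAntichainBelow p (A α))
    (href : ∀ β α, β < α → α < κ.ord → Refines (A α) (A β)) :
    ∃ f : Ordinal.{v} → P, f 0 ≤ p ∧
      (∀ β α, β ≤ α → α < κ.ord → f α ≤ f β) ∧
      ∀ α < κ.ord, f α ∈ A α := by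
  obtain ⟨q, hq0, hq_desc, hqD⟩ :=
    h _ (fun α hα => (hmax α hα).openDense_lowerClosure_union) p
  have hqp : ∀ α < κ.ord, q α ≤ p := fun α hα => (hq_desc 0 α zero_le hα).trans hq0
  have hsel : ∀ α, ∃ a ≤ p, α < κ.ord → a ∈ A α ∧ q α ≤ a := by
    intro α
    by_cases hα : α < κ.ord
    · obtain ⟨a, ha, hqa⟩ := exists_ge_of_mem_lowerClosure_union (hqp α hα) (hqD α hα)
      exact ⟨a, (hmax α hα).2.1 a ha, fun _ => ⟨ha, hqa⟩⟩
    -- Picking `p` here keeps `a 0 ≤ p` true when `κ = 0`.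
    · exact ⟨p, le_rfl, fun hα' => absurd hα' hα⟩
  choose a hap ha using hsel
  refine ⟨a, hap 0, fun β α hβα hα => ?_, fun α hα => (ha α hα).1⟩
  have hβ := hβα.trans_lt hα
  rcases hβα.eq_or_lt with rfl | hβα
  · exact le_rfl
  · exact (href β α hβα hα).le_of_compat (hmax β hβ).1 (ha α hα).1 (ha β hβ).1
      ⟨q α, (ha α hα).2, (hq_desc β α hβα.le hα).trans (ha β hβ).2⟩
end

section
/- Let (P, ≤) be a partial order and κ a cardinal. Suppose that P is <κ-distributive and that for every p ∈ P and every sequence (A_α)_{α<κ} of maximal antichains below p such that A_α refines A_β whenever β < α < κ, there exists a descending sequence (p_α)_{α<κ} with p_0 ≤ p and p_α ∈ A_α for every α < κ. Then P is strongly <κ-distributive. -/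
universe u v

/-- Any set `S` of conditions `≤ p` that is dense below `p` contains a maximal
antichain below `p`. -/
lemma exists_maxAntichain_of_dense {P : Type u} [PartialOrder P] (p : P) (S : Set P)
    (hSp : ∀ q ∈ S, q ≤ p)
    (hdense : ∀ r, r ≤ p → ∃ q, q ≤ r ∧ q ∈ S) :
    ∃ A, A ⊆ S ∧ MaxAntichainBelow p A := by
  have hub : ∀ c ⊆ {A : Set P | A ⊆ S ∧ IsAntichainIncompat A},
      IsChain (· ⊆ ·) c → ∃ ub ∈ {A : Set P | A ⊆ S ∧ IsAntichainIncompat A}, ∀ s ∈ c, s ⊆ ub := by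
    intro c hc hchain
    refine ⟨⋃₀ c, ⟨?_, ?_⟩, fun s hs => Set.subset_sUnion_of_mem hs⟩
    · intro x hx
      obtain ⟨a, hac, hxa⟩ := hx
      exact (hc hac).1 hxa
    · intro x hx y hy hxy
      obtain ⟨a, hac, hxa⟩ := hx
      obtain ⟨b, hbc, hyb⟩ := hy
      rcases hchain.total hac hbc with hab | hba
      · exact (hc hbc).2 x (hab hxa) y hyb hxy
      · exact (hc hac).2 x hxa y (hba hyb) hxy
  obtain ⟨A, hA⟩ := zorn_subset {A : Set P | A ⊆ S ∧ IsAntichainIncompat A} hub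
  refine ⟨A, hA.1.1, ⟨hA.1.2, fun a ha => hSp a (hA.1.1 ha), ?_⟩⟩
  intro q hq
  obtain ⟨s, hsq, hsS⟩ := hdense q hq
  by_contra h
  push_neg at h
  have hsnot : ∀ a ∈ A, ¬ Compat s a := by
    intro a ha hc
    obtain ⟨r, hr1, hr2⟩ := hc
    exact h a ha ⟨r, hr1.trans hsq, hr2⟩
  have hsA : s ∉ A := fun hs => hsnot s hs ⟨s, le_refl s, le_refl s⟩
  have hins : insert s A ∈ {A : Set P | A ⊆ S ∧ IsAntichainIncompat A} := by
    constructor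
    · exact Set.insert_subset hsS hA.1.1
    · intro x hx y hy hxy
      rcases hx with rfl | hx
      · rcases hy with rfl | hy
        · exact absurd rfl hxy
        · exact hsnot y hy
      · rcases hy with rfl | hy
        · intro hc
          obtain ⟨r, hr1, hr2⟩ := hc
          exact hsnot x hx ⟨r, hr2, hr1⟩
        · exact hA.1.2 x hx y hy hxy
  have heq : insert s A = A :=
    Set.Subset.antisymm (hA.2 hins (Set.subset_insert s A)) (Set.subset_insert s A)
  exact hsA (heq ▸ Set.mem_insert s A)

/-- The set of conditions below some element of a maximal antichain below `p`,
or incompatible with `p`, is open dense. -/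
lemma openDense_below_antichain {P : Type u} [PartialOrder P] (p : P) (A : Set P)
    (hA : MaxAntichainBelow p A) :
    OpenDense {q : P | (∃ a ∈ A, q ≤ a) ∨ ¬ Compat q p} := by
  constructor
  · rintro x (⟨a, ha, hxa⟩ | hx) q hq
    · exact Or.inl ⟨a, ha, hq.trans hxa⟩
    · refine Or.inr fun ⟨r, hr1, hr2⟩ => hx ⟨r, hr1.trans hq, hr2⟩
  · intro r
    by_cases hr : Compat r p
    · obtain ⟨s, hsr, hsp⟩ := hr
      obtain ⟨a, haA, t, ht1, ht2⟩ := hA.2.2 s hsp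
      exact ⟨t, ht1.trans hsr, Or.inl ⟨a, haA, ht2⟩⟩
    · exact ⟨r, le_refl r, Or.inr hr⟩

attribute [local instance] Classical.propDecidable

/-- The refining sequence of maximal antichains built by recursion. -/
noncomputable def buildA {P : Type u} [PartialOrder P] (p : P)
    (D : Ordinal.{v} → Set P) (α : Ordinal.{v}) : Set P :=
  if h : ∃ A : Set P, A ⊆ {q | q ≤ p ∧ q ∈ D α ∧ ∀ β < α, ∃ a ∈ buildA p D β, q ≤ a} ∧
      MaxAntichainBelow p A
  then h.choose else ∅
termination_by α

lemma buildA_spec {P : Type u} [PartialOrder P] {κ : Cardinal.{v}}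
    (hdist : DistribLt κ P) (D : Ordinal.{v} → Set P)
    (hD : ∀ α < κ.ord, OpenDense (D α)) (p : P) :
    ∀ α < κ.ord,
      buildA p D α ⊆ {q | q ≤ p ∧ q ∈ D α ∧ ∀ β < α, ∃ a ∈ buildA p D β, q ≤ a} ∧
      MaxAntichainBelow p (buildA p D α) := by
  intro α
  induction α using Ordinal.induction with
  | h α IH =>
    intro hα
    have hex : ∃ A : Set P,
        A ⊆ {q | q ≤ p ∧ q ∈ D α ∧ ∀ β < α, ∃ a ∈ buildA p D β, q ≤ a} ∧
        MaxAntichainBelow p A := by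
      apply exists_maxAntichain_of_dense p _ (fun q hq => hq.1)
      -- density of the set below p
      intro r hr
      set F : Ordinal.{v} → Set P := fun β =>
        D β ∩ {q : P | (∃ a ∈ buildA p D β, q ≤ a) ∨ ¬ Compat q p} with hF
      have hFod : ∀ β < α, OpenDense (F β) := by
        intro β hβα
        have hβκ := hβα.trans hα
        have h1 := hD β hβκ
        have h2 := openDense_below_antichain p _ ((IH β hβα) hβκ).2
        constructor
        · intro x hx q hq
          exact ⟨h1.1 x hx.1 q hq, h2.1 x hx.2 q hq⟩
        · intro x
          obtain ⟨y, hyx, hy⟩ := h2.2 x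
          obtain ⟨z, hzy, hz⟩ := h1.2 y
          exact ⟨z, hzy.trans hyx, hz, h2.1 y hy z hzy⟩
      obtain ⟨q, hqr, hq⟩ := hdist α hα F hFod r
      obtain ⟨q', hq'q, hq'D⟩ := (hD α hα).2 q
      refine ⟨q', hq'q.trans hqr, (hq'q.trans hqr).trans hr, hq'D, ?_⟩
      intro β hβα
      have hqEβ := (hq β hβα).2
      have hq'E : (∃ a ∈ buildA p D β, q' ≤ a) ∨ ¬ Compat q' p := by
        rcases hqEβ with ⟨a, ha, hqa⟩ | hnc
        · exact Or.inl ⟨a, ha, hq'q.trans hqa⟩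
        · exact Or.inr fun ⟨s, hs1, hs2⟩ => hnc ⟨s, hs1.trans hq'q, hs2⟩
      rcases hq'E with h | hnc
      · exact h
      · exact absurd ⟨q', le_refl q', (hq'q.trans hqr).trans hr⟩ hnc
    rw [buildA, dif_pos hex]
    exact hex.choose_spec

/-- If `P` is `<κ`-distributive and every refining `κ`-sequence of maximal antichains
below any `p` admits a descending selecting sequence, then `P` is strongly
`<κ`-distributive. -/
theorem stronglyDistrib_of_antichain_threads {P : Type u} [PartialOrder P]
    (κ : Cardinal.{v}) (hdist : DistribLt κ P)
    (hthread : ∀ p : P, ∀ A : Ordinal.{v} → Set P,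
      (∀ α < κ.ord, MaxAntichainBelow p (A α)) →
      (∀ β α, β < α → α < κ.ord → Refines (A α) (A β)) →
      ∃ f : Ordinal.{v} → P, f 0 ≤ p ∧
        (∀ β α, β ≤ α → α < κ.ord → f α ≤ f β) ∧
        ∀ α < κ.ord, f α ∈ A α) :
    StronglyDistrib κ P := by
  intro D hD p
  have hspec := buildA_spec hdist D hD p
  obtain ⟨f, hf0, hfdesc, hfA⟩ := hthread p (buildA p D)
    (fun α hα => (hspec α hα).2)
    (fun β α hβα hα a ha => ((hspec α hα).1 ha).2.2 β hβα)
  exact ⟨f, hf0, hfdesc, fun α hα => ((hspec α hα).1 (hfA α hα)).2.1⟩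
end

section
/- Let (P, ≤) be a partial order with greatest element 1 and κ a cardinal. If P is not strongly <κ-distributive, then INC has a winning strategy in the completeness game G(P, κ). -/
universe u v

/-- An ordinal is odd if it equals `γ + (2n+1)` with `γ` zero or a limit ordinal. -/
def OrdOdd (α : Ordinal.{v}) : Prop :=
  ∃ (γ : Ordinal.{v}) (n : ℕ), (γ = 0 ∨ Order.IsSuccLimit γ) ∧ α = γ + ((2 * n + 1 : ℕ) : Ordinal.{v})

/-- An ordinal is even (this includes `0` and all limit ordinals) if it equals
`γ + 2n` with `γ` zero or a limit ordinal. -/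
def OrdEven (α : Ordinal.{v}) : Prop :=
  ∃ (γ : Ordinal.{v}) (n : ℕ), (γ = 0 ∨ Order.IsSuccLimit γ) ∧ α = γ + ((2 * n : ℕ) : Ordinal.{v})

/-- A strategy for the player INC in the completeness game: given the sequence of
previous moves (of odd length), it produces INC's next move. (Only its values on
descending sequences of odd length matter.) -/
def IncStrategy.{w, x} (P : Type w) : Type (max w (x + 1)) :=
  (α : Ordinal.{x}) → ((β : Ordinal.{x}) → β < α → P) → P

/-- A strategy for the player COM in the completeness game: given the sequence of
previous moves (of even or limit length), it produces COM's next move. -/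
def ComStrategy.{w, x} (P : Type w) : Type (max w (x + 1)) :=
  (α : Ordinal.{x}) → ((β : Ordinal.{x}) → β < α → P) → P

/-- The partial play `s` of length `α` is a play of the completeness game in which
INC has followed the strategy `σ`: it starts with `1 = ⊤`, is descending, and the
move at every odd stage is given by `σ`. -/
def IncFollows {P : Type u} [Preorder P] [OrderTop P] (σ : IncStrategy.{u, v} P)
    (α : Ordinal.{v}) (s : (β : Ordinal.{v}) → β < α → P) : Prop :=
  (∀ h0 : (0 : Ordinal.{v}) < α, s 0 h0 = ⊤) ∧
  (∀ β γ (hβγ : β ≤ γ) (hγ : γ < α), s γ hγ ≤ s β (lt_of_le_of_lt hβγ hγ)) ∧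
  (∀ β (hβ : β < α), OrdOdd β → s β hβ = σ β (fun γ hγ => s γ (hγ.trans hβ)))

/-- `σ` is a winning strategy for INC in the completeness game `G(P, δ)`:
(i) against any partial play of odd length in which INC has followed `σ`, the move
produced by `σ` is a legal move (a lower bound of the previous moves), and
(ii) there is no full descending play of length `δ` in which INC follows `σ`
(i.e. COM eventually gets stuck before stage `δ`). -/
def IncWinning {P : Type u} [Preorder P] [OrderTop P] (σ : IncStrategy.{u, v} P)
    (δ : Ordinal.{v}) : Prop :=
  (∀ α, α < δ → OrdOdd α → ∀ s : (β : Ordinal.{v}) → β < α → P,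
      IncFollows σ α s → ∀ β (hβ : β < α), σ α s ≤ s β hβ) ∧
  ¬ ∃ f : Ordinal.{v} → P, f 0 = ⊤ ∧
      (∀ β γ, β ≤ γ → γ < δ → f γ ≤ f β) ∧
      ∀ α, α < δ → OrdOdd α → f α = σ α (fun β _ => f β)

/-- `τ` is a winning strategy for COM in the completeness game `G(P, δ)`: it plays
`1 = ⊤` at stage `0`, and against any descending partial play of even or limit length
`< δ` in which COM has followed `τ` at all even and limit stages, the move produced by
`τ` is a legal move (a lower bound of the previous moves). -/
def ComWinning {P : Type u} [Preorder P] [OrderTop P] (τ : ComStrategy.{u, v} P)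
    (δ : Ordinal.{v}) : Prop :=
  (∀ s : (β : Ordinal.{v}) → β < (0 : Ordinal.{v}) → P, τ 0 s = ⊤) ∧
  ∀ α, α < δ → OrdEven α → ∀ s : (β : Ordinal.{v}) → β < α → P,
    (∀ β γ (hβγ : β ≤ γ) (hγ : γ < α), s γ hγ ≤ s β (lt_of_le_of_lt hβγ hγ)) →
    (∀ β (hβ : β < α), OrdEven β → s β hβ = τ β (fun γ hγ => s γ (hγ.trans hβ))) →
    ∀ β (hβ : β < α), τ α s ≤ s β hβ

/-!
INC threads the open dense sets `D β` witnessing the failure of strong distributivity through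
the odd stages: at stage `2 * β + 1` it plays an element of `D β` below `p` and below all
previous moves. Writing `β = ω * a + n`, we have `2 * β + 1 = ω * a + (2 * n + 1)`, so
`β ↦ 2 * β + 1` enumerates the odd stages in order. For infinite `κ`, the limit ordinal
`κ.ord` is closed under this map, so a complete play of length `κ.ord` would yield a thread
through the `D β` below `p`. For finite `κ` a thread always exists, as finitely many open
dense sets have dense intersection.
-/

open Ordinal Order Cardinal

namespace Ordinal

theorem eq_zero_or_isSuccLimit_iff_omega0_dvd {γ : Ordinal} :
    γ = 0 ∨ IsSuccLimit γ ↔ ω ∣ γ := by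
  rw [← isSuccPrelimit_iff_omega0_dvd]
  refine ⟨?_, fun h => ?_⟩
  · rintro (rfl | h)
    exacts [isSuccPrelimit_zero, h.isSuccPrelimit]
  · rcases eq_or_ne γ 0 with h0 | h0
    exacts [Or.inl h0, Or.inr (.mk (by simpa [isMin_iff_eq_bot]) h)]

theorem two_mul_add_natCast_add_one {γ : Ordinal} (hγ : ω ∣ γ) (n : ℕ) :
    2 * (γ + n) + 1 = γ + ((2 * n + 1 : ℕ) : Ordinal) := by
  rw [mul_add, mul_omega0_dvd (a := 2) two_pos (by exact_mod_cast natCast_lt_omega0 2) hγ]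
  push_cast
  rw [add_assoc]

theorem two_mul_add_one_injective : Function.Injective fun β : Ordinal => 2 * β + 1 :=
  fun _ _ h => by simpa using h

theorem two_mul_add_one_lt_ord {κ : Cardinal} (hκ : ℵ₀ ≤ κ) {β : Ordinal} (hβ : β < κ.ord) :
    2 * β + 1 < κ.ord :=
  (isSuccLimit_ord hκ).add_one_lt <| isPrincipal_mul_ord hκ
    ((natCast_lt_omega0 2).trans_le (omega0_le_ord.2 hκ)) hβ

end Ordinal

theorem ordOdd_iff_exists_two_mul_add_one {α : Ordinal} : OrdOdd α ↔ ∃ β, α = 2 * β + 1 := by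
  constructor
  · rintro ⟨γ, n, hγ, rfl⟩
    exact ⟨γ + n, (two_mul_add_natCast_add_one (eq_zero_or_isSuccLimit_iff_omega0_dvd.1 hγ) n).symm⟩
  · rintro ⟨β, rfl⟩
    obtain ⟨n, hn⟩ := lt_omega0.1 (mod_lt β omega0_ne_zero)
    refine ⟨ω * (β / ω), n, eq_zero_or_isSuccLimit_iff_omega0_dvd.2 (dvd_mul_right _ _), ?_⟩
    rw [← two_mul_add_natCast_add_one (dvd_mul_right _ _), ← hn, div_add_mod]

theorem OpenDense.exists_le_forall_mem {P : Type u} [Preorder P] {D : Ordinal.{v} → Set P}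
    (n : ℕ) (hD : ∀ α < (n : Ordinal), OpenDense (D α)) (p : P) :
    ∃ q ≤ p, ∀ α < (n : Ordinal), q ∈ D α := by
  induction n with
  | zero => exact ⟨p, le_rfl, by simp⟩
  | succ n ih =>
    push_cast at hD ⊢
    obtain ⟨q', hq'p, hq'⟩ := ih fun α hα => hD α (hα.trans (lt_add_one _))
    obtain ⟨q, hqq', hq⟩ := (hD n (lt_add_one _)).2 q'
    refine ⟨q, hqq'.trans hq'p, fun α hα => ?_⟩
    rcases (lt_add_one_iff.1 hα).lt_or_eq with hα | rfl
    exacts [(hD α (hα.trans (lt_add_one _))).1 q' (hq' α hα) q hqq', hq]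

theorem stronglyDistrib_of_lt_aleph0 {P : Type u} [Preorder P] {κ : Cardinal.{v}}
    (hκ : κ < ℵ₀) : StronglyDistrib κ P := by
  obtain ⟨n, rfl⟩ := lt_aleph0.1 hκ
  intro D hD p
  rw [ord_natCast] at hD ⊢
  obtain ⟨q, hqp, hq⟩ := OpenDense.exists_le_forall_mem n hD p
  exact ⟨fun _ => q, hqp, fun _ _ _ _ => le_rfl, hq⟩

section ThreadStrategy

variable {P : Type u} [Preorder P] [OrderTop P] (D : Ordinal.{v} → Set P) (p : P)

noncomputable def threadStrategy : IncStrategy.{u, v} P := fun α s =>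
  Classical.epsilon fun q =>
    (∀ β, α = 2 * β + 1 → q ∈ D β) ∧ q ≤ p ∧ ∀ γ (hγ : γ < α), q ≤ s γ hγ

variable {D p}

theorem threadStrategy_spec {α β : Ordinal.{v}} (hα : α = 2 * β + 1) (hDβ : OpenDense (D β))
    {s : (γ : Ordinal.{v}) → γ < α → P} {r : P} (hrp : r ≤ p) (hrs : ∀ γ hγ, r ≤ s γ hγ) :
    threadStrategy D p α s ∈ D β ∧ threadStrategy D p α s ≤ p ∧
      ∀ γ hγ, threadStrategy D p α s ≤ s γ hγ := by
  obtain ⟨q, hqr, hq⟩ := hDβ.2 r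
  have hspec := Classical.epsilon_spec (p := fun q => (∀ β, α = 2 * β + 1 → q ∈ D β) ∧ q ≤ p ∧
      ∀ γ (hγ : γ < α), q ≤ s γ hγ)
    ⟨q, fun β' hβ' => two_mul_add_one_injective (hα.symm.trans hβ') ▸ hq, hqr.trans hrp,
      fun γ hγ => hqr.trans (hrs γ hγ)⟩
  exact ⟨hspec.1 β hα, hspec.2⟩

theorem exists_lowerBound_of_incFollows_threadStrategy {α β : Ordinal.{v}} (hα : α = 2 * β + 1)
    (hD0 : OpenDense (D 0)) {s : (γ : Ordinal.{v}) → γ < α → P}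
    (hs : IncFollows (threadStrategy D p) α s) : ∃ r ≤ p, ∀ γ hγ, r ≤ s γ hγ := by
  rcases eq_or_ne β 0 with rfl | hβ
  · simp only [mul_zero, zero_add] at hα
    subst hα
    refine ⟨p, le_rfl, fun γ hγ => ?_⟩
    obtain rfl := Order.lt_one_iff.1 hγ
    rw [hs.1 hγ]
    exact le_top
  -- the last move `s (2 * β)` lies below INC's first move `s 1`, which lies below `p`
  have hlast : 2 * β < α := hα ▸ lt_add_one _
  have h1 : (1 : Ordinal) ≤ 2 * β := one_le_iff_ne_zero.2 (mul_ne_zero two_ne_zero hβ)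
  have hs1 : s 1 (h1.trans_lt hlast) = threadStrategy D p 1 _ :=
    hs.2.2 1 _ (ordOdd_iff_exists_two_mul_add_one.2 ⟨0, by simp⟩)
  refine ⟨s (2 * β) hlast, (hs.2.1 1 _ h1 hlast).trans ?_, fun γ hγ => ?_⟩
  · rw [hs1]
    refine (threadStrategy_spec (β := 0) (by simp) hD0 le_rfl fun γ hγ => ?_).2.1
    obtain rfl := Order.lt_one_iff.1 hγ
    rw [hs.1]
    exact le_top
  · exact hs.2.1 γ _ (lt_add_one_iff.1 (hα ▸ hγ)) hlast

theorem threadStrategy_spec_of_incFollows {α β : Ordinal.{v}} (hα : α = 2 * β + 1)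
    (hD0 : OpenDense (D 0)) (hDβ : OpenDense (D β)) {s : (γ : Ordinal.{v}) → γ < α → P}
    (hs : IncFollows (threadStrategy D p) α s) :
    threadStrategy D p α s ∈ D β ∧ threadStrategy D p α s ≤ p ∧
      ∀ γ hγ, threadStrategy D p α s ≤ s γ hγ :=
  let ⟨_, hrp, hrs⟩ := exists_lowerBound_of_incFollows_threadStrategy hα hD0 hs
  threadStrategy_spec hα hDβ hrp hrs

theorem threadStrategy_le_of_incFollows {δ : Ordinal.{v}} (hD : ∀ α < δ, OpenDense (D α))
    {α : Ordinal.{v}} (hα : α < δ) (hodd : OrdOdd α) {s : (β : Ordinal.{v}) → β < α → P}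
    (hs : IncFollows (threadStrategy D p) α s) (β : Ordinal.{v}) (hβ : β < α) :
    threadStrategy D p α s ≤ s β hβ := by
  obtain ⟨γ, rfl⟩ := ordOdd_iff_exists_two_mul_add_one.1 hodd
  have hγ : γ < δ := ((le_mul_right γ two_pos).trans le_self_add).trans_lt hα
  exact (threadStrategy_spec_of_incFollows rfl (hD 0 (zero_le.trans_lt hγ)) (hD γ hγ) hs).2.2 β hβ

theorem not_exists_play_threadStrategy {κ : Cardinal.{v}} (hκ : ℵ₀ ≤ κ)
    (hD : ∀ α < κ.ord, OpenDense (D α))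
    (hp : ¬ ∃ g : Ordinal.{v} → P, g 0 ≤ p ∧ (∀ β α, β ≤ α → α < κ.ord → g α ≤ g β) ∧
      ∀ α < κ.ord, g α ∈ D α) :
    ¬ ∃ f : Ordinal.{v} → P, f 0 = ⊤ ∧ (∀ β γ, β ≤ γ → γ < κ.ord → f γ ≤ f β) ∧
      ∀ α, α < κ.ord → OrdOdd α → f α = threadStrategy D p α (fun β _ => f β) := by
  rintro ⟨f, hf0, hfdesc, hfodd⟩
  have h0 : (0 : Ordinal) < κ.ord := omega0_pos.trans_le (omega0_le_ord.2 hκ)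
  have hmove : ∀ β < κ.ord, f (2 * β + 1) ∈ D β ∧ f (2 * β + 1) ≤ p := by
    intro β hβ
    have hlt := two_mul_add_one_lt_ord hκ hβ
    have hfollows : IncFollows (threadStrategy D p) (2 * β + 1) fun γ _ => f γ :=
      ⟨fun _ => hf0, fun γ γ' hγγ' hγ' => hfdesc γ γ' hγγ' (hγ'.trans hlt),
        fun γ hγ hodd => hfodd γ (hγ.trans hlt) hodd⟩
    rw [hfodd _ hlt (ordOdd_iff_exists_two_mul_add_one.2 ⟨β, rfl⟩)]
    exact (threadStrategy_spec_of_incFollows rfl (hD 0 h0) (hD β hβ) hfollows).imp_right And.left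
  exact hp ⟨fun β => f (2 * β + 1), by simpa using (hmove 0 h0).2,
    fun β α hβα hα => hfdesc _ _ (by gcongr) (two_mul_add_one_lt_ord hκ hα),
    fun α hα => (hmove α hα).1⟩

theorem incWinning_threadStrategy {κ : Cardinal.{v}} (hκ : ℵ₀ ≤ κ)
    (hD : ∀ α < κ.ord, OpenDense (D α))
    (hp : ¬ ∃ g : Ordinal.{v} → P, g 0 ≤ p ∧ (∀ β α, β ≤ α → α < κ.ord → g α ≤ g β) ∧
      ∀ α < κ.ord, g α ∈ D α) :
    IncWinning (threadStrategy D p) κ.ord :=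
  ⟨fun _ hα hodd _ hs => threadStrategy_le_of_incFollows hD hα hodd hs,
    not_exists_play_threadStrategy hκ hD hp⟩

end ThreadStrategy

/-- If `P` (a partial order with greatest element) is not strongly `<κ`-distributive,
then INC has a winning strategy in the completeness game `G(P, κ)`. -/
theorem incWinning_of_not_stronglyDistrib {P : Type u} [PartialOrder P] [OrderTop P]
    (κ : Cardinal.{v}) (h : ¬ StronglyDistrib κ P) :
    ∃ σ : IncStrategy.{u, v} P, IncWinning σ κ.ord := by
  have hκ : ℵ₀ ≤ κ := not_lt.1 fun hκ => h (stronglyDistrib_of_lt_aleph0 hκ)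
  simp only [StronglyDistrib, not_forall] at h
  obtain ⟨D, hD, p, hp⟩ := h
  exact ⟨threadStrategy D p, incWinning_threadStrategy hκ hD hp⟩
end

section
/- Let (P, ≤) be a partial order with greatest element 1 and κ a cardinal. If INC has a winning strategy in the completeness game G(P, κ), then P is not strongly <κ-distributive. -/
universe u v

/-!
INC's strategy `σ` yields a tree of plays in which INC follows `σ`: level `α` consists of plays
of length `2α + 2` (COM moves at stage `2α`, `σ` answers at `2α + 1`) whose restrictions to
length `2β + 2` lie in level `β`, chosen maximal with pairwise incompatible last moves.
The conditions lying below the last move of a level-`α` play or incompatible with all of them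
form an open dense set `D_α`. Along a thread `(p_α)` through `(D_α)`, maximality lets COM play
`p_α` after the union of the earlier plays, so `p_α` lies below a level-`α` last move, and
incompatibility makes these plays cohere into a play of length `κ` following `σ`, which cannot
exist. This needs `2α + 1 < κ` for `α < κ`; for finite `κ`, COM wins by repeating the last move.
-/

open Ordinal

lemma div_two_le_iff {x γ : Ordinal} : x / 2 ≤ γ ↔ x < 2 * γ + 2 := by
  rw [← Order.lt_add_one_iff, ← lt_mul_iff_div_lt two_ne_zero, mul_add_one]

lemma lt_two_mul_add_two_iff {x β : Ordinal} : x < 2 * β + 2 ↔ x ≤ 2 * β + 1 := by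
  rw [← one_add_one_eq_two, ← add_assoc, Order.lt_add_one_iff]

lemma two_mul_eq_of_omega0_dvd {γ : Ordinal} (h : ω ∣ γ) : 2 * γ = γ :=
  mul_omega0_dvd two_pos (by exact_mod_cast natCast_lt_omega0 2) h

lemma ordOdd_two_mul_add_one (α : Ordinal) : OrdOdd (2 * α + 1) := by
  obtain ⟨n, hn⟩ := lt_omega0.mp (mod_lt α omega0_ne_zero)
  refine ⟨ω * (α / ω), n, ?_, ?_⟩
  · rcases eq_or_ne (ω * (α / ω)) 0 with h | h
    · exact .inl h
    · exact .inr (isSuccLimit_iff.mpr ⟨h, isSuccPrelimit_iff_omega0_dvd.mpr (dvd_mul_right _ _)⟩)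
  · conv_lhs => rw [← div_add_mod α ω, hn, mul_add, two_mul_eq_of_omega0_dvd (dvd_mul_right _ _)]
    push_cast
    rw [add_assoc]

lemma OrdOdd.mod_two {x : Ordinal} (h : OrdOdd x) : x % 2 = 1 := by
  obtain ⟨γ, n, hγ, rfl⟩ := h
  have hγω : ω ∣ γ := by
    rcases hγ with rfl | hγ
    · exact dvd_zero _
    · exact isSuccPrelimit_iff_omega0_dvd.mp hγ.isSuccPrelimit
  rw [← two_mul_eq_of_omega0_dvd hγω]
  push_cast
  rw [← add_assoc, ← mul_add, mul_add_mod_self]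
  exact mod_eq_of_lt one_lt_two

lemma OrdOdd.ne_zero {x : Ordinal} (h : OrdOdd x) : x ≠ 0 := by
  rintro rfl
  simpa using h.mod_two

lemma not_ordOdd_two_mul (α : Ordinal) : ¬ OrdOdd (2 * α) := fun h => by
  simpa using h.mod_two

lemma exists_maximal_antichain_subset {α : Type*} (r : α → α → Prop) (G : Set α) :
    ∃ A, Maximal (fun A => A ⊆ G ∧ IsAntichain r A) A :=
  zorn_subset _ fun c hc hchain => ⟨⋃₀ c,
    ⟨Set.sUnion_subset fun _ hA => (hc hA).1, hchain.pairwise_sUnion.mpr fun _ hA => (hc hA).2⟩,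
    fun _ => Set.subset_sUnion_of_mem⟩

lemma Maximal.exists_rel_of_mem {α : Type*} {r : α → α → Prop} {G A : Set α}
    (hA : Maximal (fun A => A ⊆ G ∧ IsAntichain r A) A) {g : α} (hg : g ∈ G) (hgg : r g g) :
    ∃ a ∈ A, r g a ∨ r a g := by
  by_contra! hno
  have hgA : insert g A ⊆ A := hA.2 ⟨Set.insert_subset hg hA.1.1,
    hA.1.2.insert (fun b hb _ => (hno b hb).2) fun b hb _ => (hno b hb).1⟩ (Set.subset_insert _ _)
  exact (hno g (hgA (Set.mem_insert _ _))).1 hgg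

lemma IsLowerSet.openDense_union {P : Type u} [Preorder P] {L : Set P} (hL : IsLowerSet L) :
    OpenDense (L ∪ {q | ∀ w ≤ q, w ∉ L}) := by
  refine ⟨?_, fun p => ?_⟩
  · rintro p (hp | hp) q hqp
    exacts [.inl (hL hqp hp), .inr fun w hwq => hp w (hwq.trans hqp)]
  · by_cases h : ∃ w ≤ p, w ∈ L
    · obtain ⟨w, hwp, hw⟩ := h
      exact ⟨w, hwp, .inl hw⟩
    · exact ⟨p, le_rfl, .inr fun w hwp hw => h ⟨w, hwp, hw⟩⟩

section Plays

variable {P : Type u} [Preorder P] [OrderTop P] {σ : IncStrategy.{u, v} P}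
  {m m' δ : Ordinal.{v}} {g g' : Ordinal.{v} → P}

def IsIncPlay (σ : IncStrategy.{u, v} P) (m : Ordinal.{v}) (g : Ordinal.{v} → P) : Prop :=
  IncFollows σ m fun x _ => g x

lemma isIncPlay_zero (g : Ordinal.{v} → P) : IsIncPlay σ 0 g :=
  ⟨fun h => absurd h (lt_irrefl 0), fun _ _ _ h => absurd h not_lt_zero,
    fun _ h => absurd h not_lt_zero⟩

lemma IsIncPlay.mono (h : IsIncPlay σ m g) (hm : m' ≤ m) : IsIncPlay σ m' g :=
  ⟨fun h0 => h.1 (h0.trans_le hm), fun x y hxy hy => h.2.1 x y hxy (hy.trans_le hm),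
    fun x hx => h.2.2 x (hx.trans_le hm)⟩

lemma IsIncPlay.congr (h : IsIncPlay σ m g) (hg : ∀ x < m, g x = g' x) : IsIncPlay σ m g' := by
  refine ⟨fun h0 => (hg 0 h0).symm.trans (h.1 h0), fun x y hxy hy => ?_, fun x hx hodd => ?_⟩
  · dsimp only
    rw [← hg x (hxy.trans_lt hy), ← hg y hy]
    exact h.2.1 x y hxy hy
  · dsimp only
    rw [← hg x hx]
    refine (h.2.2 x hx hodd).trans ?_
    congr 1
    funext y hy
    exact hg y (hy.trans hx)

lemma isIncPlay_of_forall_lt (h : ∀ x < m, IsIncPlay σ (x + 1) g) : IsIncPlay σ m g :=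
  ⟨fun h0 => (h 0 h0).1 (lt_add_one 0), fun x y hxy hy => (h y hy).2.1 x y hxy (lt_add_one y),
    fun x hx => (h x hx).2.2 x (lt_add_one x)⟩

lemma IsIncPlay.add_one (h : IsIncPlay σ m g) (h0 : m = 0 → g m = ⊤)
    (hle : ∀ x < m, g m ≤ g x) (hodd : OrdOdd m → g m = σ m fun x _ => g x) :
    IsIncPlay σ (m + 1) g := by
  refine ⟨fun _ => ?_, fun x y hxy hy => ?_, fun x hx hxodd => ?_⟩
  · rcases eq_zero_or_pos m with rfl | hm
    · exact h0 rfl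
    · exact h.1 hm
  · rcases (Order.lt_add_one_iff.mp hy).lt_or_eq with hy | rfl
    · exact h.2.1 x y hxy hy
    · rcases hxy.lt_or_eq with hx | rfl
      exacts [hle x hx, le_rfl]
  · rcases (Order.lt_add_one_iff.mp hx).lt_or_eq with hx | rfl
    exacts [h.2.2 x hx hxodd, hodd hxodd]

lemma IsIncPlay.update (h : IsIncPlay σ m g) {c : P} (h0 : m = 0 → c = ⊤)
    (hle : ∀ x < m, c ≤ g x) (hodd : OrdOdd m → c = σ m fun x _ => g x) :
    IsIncPlay σ (m + 1) (Function.update g m c) := by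
  have hagree : ∀ x < m, g x = Function.update g m c x := fun x hx =>
    (Function.update_of_ne hx.ne _ _).symm
  refine (h.congr hagree).add_one ?_ ?_ ?_ <;> simp only [Function.update_self]
  · exact h0
  · exact fun x hx => (hagree x hx) ▸ hle x hx
  · intro hm
    refine (hodd hm).trans ?_
    congr 1
    funext x hx
    exact hagree x hx

lemma IsIncPlay.update_of_not_ordOdd (h : IsIncPlay σ m g) (hm : ¬ OrdOdd m) {c : P}
    (h0 : m = 0 → c = ⊤) (hle : ∀ x < m, c ≤ g x) :
    IsIncPlay σ (m + 1) (Function.update g m c) :=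
  h.update h0 hle fun hodd => absurd hodd hm

lemma IncWinning.isIncPlay_update (hσ : IncWinning σ δ) (h : IsIncPlay σ m g) (hm : OrdOdd m)
    (hmδ : m < δ) : IsIncPlay σ (m + 1) (Function.update g m (σ m fun x _ => g x)) :=
  h.update (fun h0 => absurd h0 hm.ne_zero) (hσ.1 m hmδ hm _ h) fun _ => rfl

lemma IncWinning.not_isIncPlay (hσ : IncWinning σ δ) (g : Ordinal.{v} → P) :
    ¬ IsIncPlay σ δ g := by
  intro h
  rcases eq_zero_or_pos δ with rfl | hδ
  · exact hσ.2 ⟨fun _ => ⊤, rfl, fun _ _ _ h => absurd h not_lt_zero,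
      fun _ h => absurd h not_lt_zero⟩
  · exact hσ.2 ⟨g, h.1 hδ, fun x y hxy hy => h.2.1 x y hxy hy, h.2.2⟩

lemma IncWinning.exists_isIncPlay_natCast (hσ : IncWinning σ δ) :
    ∀ n : ℕ, (n : Ordinal) ≤ δ → ∃ g, IsIncPlay σ n g
  | 0, _ => ⟨fun _ => ⊤, by simpa using isIncPlay_zero _⟩
  | n + 1, hn => by
    have hnδ : (n : Ordinal) < δ := (Nat.cast_lt.mpr n.lt_succ_self).trans_le hn
    obtain ⟨g, hg⟩ := hσ.exists_isIncPlay_natCast n hnδ.le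
    push_cast
    by_cases hodd : OrdOdd (n : Ordinal)
    · exact ⟨_, hσ.isIncPlay_update hg hodd hnδ⟩
    · rcases n with _ | k
      · exact ⟨_, hg.update_of_not_ordOdd hodd (c := ⊤) (fun _ => rfl) fun x hx => by simp at hx⟩
      · refine ⟨_, hg.update_of_not_ordOdd hodd (c := g k) (fun h => ?_) fun x hx => ?_⟩
        · simp at h
        · push_cast at hx
          exact hg.2.1 x k (Order.lt_add_one_iff.mp hx) (by push_cast; exact lt_add_one _)

lemma IncWinning.omega0_le (hσ : IncWinning σ δ) : ω ≤ δ := by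
  by_contra! hδ
  obtain ⟨n, rfl⟩ := lt_omega0.mp hδ
  obtain ⟨g, hg⟩ := hσ.exists_isIncPlay_natCast n le_rfl
  exact hσ.not_isIncPlay g hg

lemma isIncPlay_glue {α : Ordinal.{v}} {W : Ordinal.{v} → Ordinal.{v} → P}
    (hW : ∀ γ < α, IsIncPlay σ (2 * γ + 2) (W γ))
    (hcoh : ∀ β γ, β ≤ γ → γ < α → ∀ x < 2 * β + 2, W β x = W γ x) :
    IsIncPlay σ (2 * α) fun x => W (x / 2) x := by
  refine isIncPlay_of_forall_lt fun x hx => ?_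
  have hxγ : x < 2 * (x / 2) + 2 := div_two_le_iff.mp le_rfl
  refine ((hW _ ((lt_mul_iff_div_lt two_ne_zero).mp hx)).mono ?_).congr fun y hy => ?_
  · exact Order.add_one_le_of_lt hxγ
  · exact (hcoh _ _ (div_two_le_iff.mpr ((Order.lt_add_one_iff.mp hy).trans_lt hxγ))
      ((lt_mul_iff_div_lt two_ne_zero).mp hx) y (div_two_le_iff.mp le_rfl)).symm

end Plays

section Tree

variable {P : Type u} [Preorder P] [OrderTop P] (σ : IncStrategy.{u, v} P)

def levelCandidates (α : Ordinal.{v}) (H : ∀ β < α, Set (Ordinal.{v} → P)) :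
    Set (Ordinal.{v} → P) :=
  {g | IsIncPlay σ (2 * α + 2) g ∧ ∀ β (hβ : β < α), ∃ s ∈ H β hβ, ∀ x < 2 * β + 2, s x = g x}

def CompatibleAt (m : Ordinal.{v}) (s t : Ordinal.{v} → P) : Prop :=
  ∃ w, w ≤ s m ∧ w ≤ t m

noncomputable def playLevel : Ordinal.{v} → Set (Ordinal.{v} → P) :=
  Ordinal.lt_wf.fix fun α H =>
    (exists_maximal_antichain_subset (CompatibleAt (2 * α + 1)) (levelCandidates σ α H)).choose

variable {σ}

lemma maximal_playLevel (α : Ordinal.{v}) :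
    Maximal (fun A => A ⊆ levelCandidates σ α (fun β _ => playLevel σ β) ∧
      IsAntichain (CompatibleAt (2 * α + 1)) A) (playLevel σ α) := by
  rw [playLevel, Ordinal.lt_wf.fix_eq]
  exact Classical.choose_spec (exists_maximal_antichain_subset _ _)

lemma isIncPlay_of_mem_playLevel {α : Ordinal.{v}} {s : Ordinal.{v} → P}
    (hs : s ∈ playLevel σ α) : IsIncPlay σ (2 * α + 2) s :=
  ((maximal_playLevel α).1.1 hs).1

lemma exists_mem_playLevel_restrict {α β : Ordinal.{v}} (hβα : β ≤ α) {s : Ordinal.{v} → P}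
    (hs : s ∈ playLevel σ α) : ∃ t ∈ playLevel σ β, ∀ x < 2 * β + 2, t x = s x := by
  rcases hβα.lt_or_eq with hβα | rfl
  exacts [((maximal_playLevel α).1.1 hs).2 β hβα, ⟨s, hs, fun _ _ => rfl⟩]

lemma exists_mem_playLevel_compatibleAt {α : Ordinal.{v}} {g : Ordinal.{v} → P}
    (hg : g ∈ levelCandidates σ α fun β _ => playLevel σ β) :
    ∃ s ∈ playLevel σ α, CompatibleAt (2 * α + 1) g s := by
  obtain ⟨s, hs, hgs | ⟨w, hws, hwg⟩⟩ :=
    (maximal_playLevel α).exists_rel_of_mem hg ⟨g (2 * α + 1), le_rfl, le_rfl⟩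
  exacts [⟨s, hs, hgs⟩, ⟨s, hs, w, hwg, hws⟩]

lemma playLevel_eq_of_le {α β : Ordinal.{v}} (hβα : β ≤ α) {s t : Ordinal.{v} → P}
    (hs : s ∈ playLevel σ α) (ht : t ∈ playLevel σ β) {w : P} (hws : w ≤ s (2 * α + 1))
    (hwt : w ≤ t (2 * β + 1)) : ∀ x < 2 * β + 2, t x = s x := by
  obtain ⟨s', hs', hs's⟩ := exists_mem_playLevel_restrict hβα hs
  have hws' : w ≤ s' (2 * β + 1) := by
    rw [hs's _ (lt_two_mul_add_two_iff.mpr le_rfl)]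
    exact hws.trans ((isIncPlay_of_mem_playLevel hs).2.1 _ _
      (by gcongr) (lt_two_mul_add_two_iff.mpr le_rfl))
  have : t = s' := by
    by_contra hne
    exact (maximal_playLevel β).1.2 ht hs' hne ⟨w, hwt, hws'⟩
  exact this ▸ hs's

variable {δ α : Ordinal.{v}}

def belowPlayLevel (σ : IncStrategy.{u, v} P) (α : Ordinal.{v}) : Set P :=
  {q | ∃ s ∈ playLevel σ α, q ≤ s (2 * α + 1)}

lemma isLowerSet_belowPlayLevel : IsLowerSet (belowPlayLevel σ α) :=
  fun _ _ hqp ⟨s, hs, hps⟩ => ⟨s, hs, hqp.trans hps⟩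

lemma exists_isIncPlay_branch {f : Ordinal.{v} → P} (hf : AntitoneOn f (Set.Iio α))
    (hfα : ∀ γ < α, f γ ∈ belowPlayLevel σ γ) :
    ∃ u, IsIncPlay σ (2 * α) u ∧
      ∀ γ < α, ∃ s ∈ playLevel σ γ, f γ ≤ s (2 * γ + 1) ∧ ∀ x < 2 * γ + 2, s x = u x := by
  choose! W hWmem hWf using hfα
  have hcoh : ∀ β γ, β ≤ γ → γ < α → ∀ x < 2 * β + 2, W β x = W γ x := fun β γ hβγ hγ =>
    playLevel_eq_of_le hβγ (hWmem γ hγ) (hWmem β (hβγ.trans_lt hγ)) (hWf γ hγ)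
      ((hf (hβγ.trans_lt hγ) hγ hβγ).trans (hWf β (hβγ.trans_lt hγ)))
  refine ⟨_, isIncPlay_glue (fun γ hγ => isIncPlay_of_mem_playLevel (hWmem γ hγ)) hcoh,
    fun γ hγ => ⟨W γ, hWmem γ hγ, hWf γ hγ, fun x hx => ?_⟩⟩
  exact (hcoh _ γ (div_two_le_iff.mpr hx) hγ x (div_two_le_iff.mp le_rfl)).symm

lemma IncWinning.exists_mem_belowPlayLevel (hσ : IncWinning σ δ) (hα : 2 * α + 1 < δ)
    {u : Ordinal.{v} → P} (hu : IsIncPlay σ (2 * α) u)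
    (hbranch : ∀ β < α, ∃ s ∈ playLevel σ β, ∀ x < 2 * β + 2, s x = u x)
    {c : P} (hc0 : α = 0 → c = ⊤) (hc : ∀ x < 2 * α, c ≤ u x) :
    ∃ w ≤ c, w ∈ belowPlayLevel σ α := by
  have hg₁ := hu.update_of_not_ordOdd (not_ordOdd_two_mul α) (by simpa using hc0) hc
  have hg := hσ.isIncPlay_update hg₁ (ordOdd_two_mul_add_one α) hα
  set g := Function.update (Function.update u (2 * α) c) (2 * α + 1)
    (σ (2 * α + 1) fun x _ => Function.update u (2 * α) c x)
  have hgu : ∀ x < 2 * α, g x = u x := fun x hx => by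
    simp only [g]
    rw [Function.update_of_ne (hx.trans (lt_add_one _)).ne, Function.update_of_ne hx.ne]
  have hgc : g (2 * α + 1) ≤ c := by
    refine (hg.2.1 _ _ le_self_add (lt_add_one _)).trans_eq ?_
    simp only [g]
    rw [Function.update_of_ne (lt_add_one _).ne, Function.update_self]
  have hcand : g ∈ levelCandidates σ α fun β _ => playLevel σ β := by
    refine ⟨by rwa [add_assoc, one_add_one_eq_two] at hg, fun β hβ => ?_⟩
    obtain ⟨s, hs, hsu⟩ := hbranch β hβ
    refine ⟨s, hs, fun x hx => (hsu x hx).trans (hgu x (hx.trans_le ?_)).symm⟩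
    rw [← mul_add_one]
    exact mul_le_mul_right (Order.add_one_le_of_lt hβ) 2
  obtain ⟨s, hs, w, hwg, hws⟩ := exists_mem_playLevel_compatibleAt hcand
  exact ⟨w, hwg.trans hgc, s, hs, hws⟩

lemma IncWinning.mem_belowPlayLevel_of_thread (hσ : IncWinning σ δ)
    (hδ : ∀ α < δ, 2 * α + 1 < δ) {f : Ordinal.{v} → P} (hf : AntitoneOn f (Set.Iio δ))
    (hfD : ∀ α < δ, f α ∈ belowPlayLevel σ α ∪ {q | ∀ w ≤ q, w ∉ belowPlayLevel σ α})
    (hf0 : f 0 ∈ belowPlayLevel σ 0) : ∀ α < δ, f α ∈ belowPlayLevel σ α := by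
  intro α
  induction α using WellFoundedLT.induction with
  | _ α IH =>
    intro hαδ
    rcases eq_or_ne α 0 with rfl | hα0
    · exact hf0
    obtain ⟨u, hu, hbranch⟩ := exists_isIncPlay_branch (hf.mono (Set.Iio_subset_Iio hαδ.le))
      fun γ hγ => IH γ hγ (hγ.trans hαδ)
    have hfu : ∀ x < 2 * α, f α ≤ u x := by
      intro x hx
      have hxα : x / 2 < α := (lt_mul_iff_div_lt two_ne_zero).mp hx
      have hxs : x < 2 * (x / 2) + 2 := div_two_le_iff.mp le_rfl
      obtain ⟨s, hs, hfs, hsu⟩ := hbranch _ hxα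
      calc f α ≤ f (x / 2) := hf (hxα.trans hαδ) hαδ hxα.le
        _ ≤ s (2 * (x / 2) + 1) := hfs
        _ ≤ s x := (isIncPlay_of_mem_playLevel hs).2.1 _ _ (lt_two_mul_add_two_iff.mp hxs)
            (lt_two_mul_add_two_iff.mpr le_rfl)
        _ = u x := hsu x hxs
    obtain ⟨w, hwf, hw⟩ := hσ.exists_mem_belowPlayLevel (hδ α hαδ) hu
      (fun β hβ => (hbranch β hβ).imp fun s h => ⟨h.1, h.2.2⟩) (fun h => absurd h hα0) hfu
    exact (hfD α hαδ).resolve_right fun hdead => hdead w hwf hw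

theorem IncWinning.not_stronglyDistrib {κ : Cardinal.{v}} (hσ : IncWinning σ κ.ord)
    (hκ : Cardinal.aleph0 ≤ κ) : ¬ StronglyDistrib κ P := by
  intro hSD
  have hκω : ω ≤ κ.ord := by rwa [← Cardinal.ord_aleph0, Cardinal.ord_le_ord]
  have hδ : ∀ α < κ.ord, 2 * α + 1 < κ.ord := fun α hα =>
    (Cardinal.isSuccLimit_ord hκ).add_one_lt
      (Ordinal.isPrincipal_mul_ord hκ ((natCast_lt_omega0 2).trans_le hκω) hα)
  -- level `0` is nonempty since COM may open with `⊤`; the thread starts below one of its plays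
  obtain ⟨p, -, hp⟩ := hσ.exists_mem_belowPlayLevel (u := fun _ => ⊤)
    (by simpa using hδ 0 (omega0_pos.trans_le hκω)) (by simpa using isIncPlay_zero _)
    (fun _ h => absurd h not_lt_zero) (c := ⊤) (fun _ => rfl) (fun _ h => by simp at h)
  obtain ⟨f, hfp, hf, hfD⟩ := hSD _ (fun α _ => isLowerSet_belowPlayLevel.openDense_union) p
  have hanti : AntitoneOn f (Set.Iio κ.ord) := fun β _ α hα hβα => hf β α hβα hα
  obtain ⟨u, hu, -⟩ := exists_isIncPlay_branch hanti
    (hσ.mem_belowPlayLevel_of_thread hδ hanti hfD (isLowerSet_belowPlayLevel hfp hp))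
  exact hσ.not_isIncPlay u (hu.mono (le_mul_right _ two_pos))

end Tree

/-- If INC has a winning strategy in the completeness game `G(P, κ)` on a partial
order `P` with greatest element, then `P` is not strongly `<κ`-distributive. -/
theorem not_stronglyDistrib_of_incWinning {P : Type u} [PartialOrder P] [OrderTop P]
    (κ : Cardinal.{v}) (h : ∃ σ : IncStrategy.{u, v} P, IncWinning σ κ.ord) :
    ¬ StronglyDistrib κ P := by
  obtain ⟨σ, hσ⟩ := h
  refine hσ.not_stronglyDistrib ?_
  rw [← Cardinal.ord_le_ord, Cardinal.ord_aleph0]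
  exact hσ.omega0_le
end

section
/- Let κ be a regular cardinal, (Q, ≤) a κ-cc partial order and (P, ≤) a strongly <κ-distributive partial order, and equip Q × P with the product order ((q', p') ≤ (q, p) iff q' ≤ q and p' ≤ p). If D ⊆ Q × P is open dense and q ∈ Q, then the set D_q consisting of all p ∈ P such that there exists a maximal antichain A below q in Q with A × {p} ⊆ D is open dense in P. -/
open Cardinal

universe u w

/-!
Fix a well-order of `Q`. For `t ∈ P` the *run* of `t` is the greedy sequence in `Q` whose `η`-th
term is the least `s` below a condition `r ≤ q` incompatible with all earlier terms (when such an
`r` exists) such that `(s, t') ∈ D` for some `t' ≤ t`. As `t` decreases these candidate sets only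
shrink, so as long as each term `s` of the run of `t` already satisfies `(s, t) ∈ D`, every
extension of `t` has the same run. Hence "the first `α + 1` terms of the run of `t` are realized
at `t`" defines open dense sets (strong distributivity handles the limit stages), and along a
thread `f` through them the terms `run (f α) α` form a greedy antichain below `q`. By the
`κ`-chain condition it becomes predense below `q` at some stage `η < κ`, and then it witnesses
that `f η` lies in the required set.
-/

open Set

universe v

section Compat

variable {Q : Type u} [Preorder Q]

theorem Compat.refl (a : Q) : Compat a a := ⟨a, le_rfl, le_rfl⟩

theorem Compat.symm {a b : Q} (h : Compat a b) : Compat b a :=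
  let ⟨r, hra, hrb⟩ := h; ⟨r, hrb, hra⟩

theorem Compat.mono_left {a a' b : Q} (h : Compat a' b) (ha : a' ≤ a) : Compat a b :=
  let ⟨r, hra, hrb⟩ := h; ⟨r, hra.trans ha, hrb⟩

def PredenseBelow (q : Q) (X : Set Q) : Prop := ∀ w ≤ q, ∃ a ∈ X, Compat w a

open Classical in
/-- Junk value `q` when `X` is predense below `q`. -/
noncomputable def escapeBelow (q : Q) (X : Set Q) : Q :=
  if h : ∃ w ≤ q, ∀ a ∈ X, ¬Compat w a then h.choose else q

theorem escapeBelow_le (q : Q) (X : Set Q) : escapeBelow q X ≤ q := by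
  unfold escapeBelow
  split_ifs with h
  exacts [h.choose_spec.1, le_rfl]

theorem not_compat_escapeBelow {q a : Q} {X : Set Q} (hX : ¬PredenseBelow q X) (ha : a ∈ X) :
    ¬Compat (escapeBelow q X) a := by
  have h : ∃ w ≤ q, ∀ a ∈ X, ¬Compat w a := by
    simpa only [PredenseBelow, not_forall, not_exists, not_and, exists_prop] using hX
  rw [escapeBelow, dif_pos h]
  exact h.choose_spec.2 a ha

end Compat

section GreedyAntichain

variable {Q : Type u} [Preorder Q] {q : Q} {z : Ordinal.{v} → Q} {ζ : Ordinal.{v}}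
  (hz : ∀ β < ζ, z β ≤ escapeBelow q (z '' Iio β))
  (hnp : ∀ β < ζ, ¬PredenseBelow q (z '' Iio β))
include hz hnp

theorem not_compat_of_escapeBelow {β γ : Ordinal.{v}} (hβγ : β < γ) (hγ : γ < ζ) :
    ¬Compat (z γ) (z β) := fun h =>
  not_compat_escapeBelow (hnp γ hγ) ⟨β, hβγ, rfl⟩ (h.mono_left (hz γ hγ))

theorem injOn_of_escapeBelow : InjOn z (Iio ζ) := by
  intro β hβ γ hγ hzβγ
  by_contra hne
  rcases lt_or_gt_of_ne hne with hlt | hlt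
  · exact not_compat_of_escapeBelow hz hnp hlt hγ (hzβγ ▸ Compat.refl _)
  · exact not_compat_of_escapeBelow hz hnp hlt hβ (hzβγ ▸ Compat.refl _)

theorem isAntichainIncompat_image_of_escapeBelow : IsAntichainIncompat (z '' Iio ζ) := by
  rintro _ ⟨β, hβ, rfl⟩ _ ⟨γ, hγ, rfl⟩ hne
  rcases lt_trichotomy β γ with hlt | rfl | hlt
  · exact fun h => not_compat_of_escapeBelow hz hnp hlt hγ h.symm
  · exact absurd rfl hne
  · exact not_compat_of_escapeBelow hz hnp hlt hβ

theorem maxAntichainBelow_image_of_escapeBelow (hpre : PredenseBelow q (z '' Iio ζ)) :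
    MaxAntichainBelow q (z '' Iio ζ) :=
  ⟨isAntichainIncompat_image_of_escapeBelow hz hnp,
    by rintro _ ⟨β, hβ, rfl⟩; exact (hz β hβ).trans (escapeBelow_le q _), hpre⟩

end GreedyAntichain

theorem Cardinal.mk_image_Iio_ord {α : Type u} {κ : Cardinal.{u}} {z : Ordinal.{u} → α}
    (hz : InjOn z (Iio κ.ord)) : #(z '' Iio κ.ord) = κ := by
  have h := mk_image_eq_of_injOn_lift z _ hz
  rw [mk_Iio_ordinal, card_ord, lift_lift] at h
  exact lift_inj.1 h

section WellOrderMin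

variable {α : Type u}

open Classical in
noncomputable def wellOrderMin (S : Set α) (d : α) : α :=
  if h : S.Nonempty then (IsWellFounded.wf (r := WellOrderingRel)).min S h else d

theorem wellOrderMin_mem {S : Set α} (h : S.Nonempty) (d : α) : wellOrderMin S d ∈ S := by
  rw [wellOrderMin, dif_pos h]
  exact WellFounded.min_mem _ S h

theorem wellOrderMin_eq_of_subset {S S' : Set α} {d : α} (hsub : S' ⊆ S)
    (hmem : wellOrderMin S d ∈ S') : wellOrderMin S' d = wellOrderMin S d := by
  have hS : S.Nonempty := ⟨_, hsub hmem⟩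
  have hS' : S'.Nonempty := ⟨_, hmem⟩
  simp only [wellOrderMin, dif_pos hS, dif_pos hS'] at hmem ⊢
  rcases trichotomous_of WellOrderingRel (WellFounded.min _ S' hS')
    (WellFounded.min _ S hS) with h | h | h
  · exact absurd h (WellFounded.not_lt_min _ S (hsub (WellFounded.min_mem _ S' hS')))
  · exact h
  · exact absurd h (WellFounded.not_lt_min _ S' hmem)

end WellOrderMin

section Run

variable {Q : Type u} {P : Type w} [Preorder Q] [Preorder P] (D : Set (Q × P)) (q : Q)

def sectionBelow (r : Q) (t : P) : Set Q := {s | s ≤ r ∧ ∃ t' ≤ t, (s, t') ∈ D}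

theorem sectionBelow_anti {r : Q} {t₁ t : P} (h : t₁ ≤ t) :
    sectionBelow D r t₁ ⊆ sectionBelow D r t :=
  fun _ ⟨hs, t', ht', hmem⟩ => ⟨hs, t', ht'.trans h, hmem⟩

noncomputable def run (t : P) : Ordinal.{v} → Q :=
  wellFounded_lt.fix (C := fun _ => Q) fun η prev =>
    wellOrderMin (sectionBelow D (escapeBelow q (range fun β : Iio η => prev β β.2)) t) q

theorem run_eq (t : P) (η : Ordinal.{v}) :
    run D q t η = wellOrderMin (sectionBelow D (escapeBelow q (run D q t '' Iio η)) t) q := by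
  rw [run, WellFounded.fix_eq, image_eq_range]

def RunRealized (t : P) (ξ : Ordinal.{v}) : Prop := ∀ η < ξ, (run D q t η, t) ∈ D

variable {D q} (hD : OpenDense D)
include hD

theorem sectionBelow_nonempty (r : Q) (t : P) :
    (sectionBelow D r t).Nonempty := by
  obtain ⟨⟨s, t'⟩, ⟨hs, ht'⟩, hmem⟩ := hD.2 (r, t)
  exact ⟨s, hs, t', ht', hmem⟩

theorem run_mem_sectionBelow (t : P) (η : Ordinal.{v}) :
    run D q t η ∈ sectionBelow D (escapeBelow q (run D q t '' Iio η)) t := by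
  rw [run_eq]
  exact wellOrderMin_mem (sectionBelow_nonempty hD _ _) q

theorem run_le_escapeBelow (t : P) (η : Ordinal.{v}) :
    run D q t η ≤ escapeBelow q (run D q t '' Iio η) :=
  (run_mem_sectionBelow hD t η).1

theorem run_eq_of_le_of_mem {t₁ t : P} {η : Ordinal.{v}} (h : t₁ ≤ t)
    (hprev : ∀ β < η, run D q t₁ β = run D q t β) (hmem : (run D q t η, t₁) ∈ D) :
    run D q t₁ η = run D q t η := by
  have hmem' : run D q t η ∈ sectionBelow D (escapeBelow q (run D q t '' Iio η)) t₁ :=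
    ⟨run_le_escapeBelow hD t η, t₁, le_rfl, hmem⟩
  rw [run_eq D q t η] at hmem'
  have himage : run D q t₁ '' Iio η = run D q t '' Iio η := image_congr hprev
  rw [run_eq D q t₁, himage, run_eq D q t η]
  exact wellOrderMin_eq_of_subset (sectionBelow_anti D h) hmem'

theorem run_eq_of_le {t₁ t : P} {ξ : Ordinal.{v}} (h : t₁ ≤ t) (ht : RunRealized D q t ξ) :
    ∀ η < ξ, run D q t₁ η = run D q t η := by
  intro η
  induction η using WellFoundedLT.induction with
  | _ η ih =>
    intro hη
    exact run_eq_of_le_of_mem hD h (fun β hβ => ih β hβ (hβ.trans hη))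
      (hD.1 _ (ht η hη) _ ⟨le_rfl, h⟩)

theorem RunRealized.anti {t₁ t : P} {ξ : Ordinal.{v}} (h : t₁ ≤ t) (ht : RunRealized D q t ξ) :
    RunRealized D q t₁ ξ := fun η hη => by
  rw [run_eq_of_le hD h ht η hη]
  exact hD.1 _ (ht η hη) _ ⟨le_rfl, h⟩

theorem exists_le_runRealized_add_one {t : P} {ξ : Ordinal.{v}} (ht : RunRealized D q t ξ) :
    ∃ t' ≤ t, RunRealized D q t' (ξ + 1) := by
  obtain ⟨-, t', ht', hmem⟩ := run_mem_sectionBelow hD t ξ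
  refine ⟨t', ht', fun η hη => ?_⟩
  rcases (Order.lt_add_one_iff.1 hη).lt_or_eq with hlt | rfl
  · exact (ht.anti hD ht') η hlt
  · rwa [run_eq_of_le_of_mem hD ht' (run_eq_of_le hD ht' ht) hmem]

theorem exists_le_runRealized {κ : Cardinal.{v}} (hP : StronglyDistrib κ P) :
    ∀ ξ < κ.ord, ∀ p : P, ∃ t ≤ p, RunRealized D q t ξ := by
  intro ξ
  induction ξ using WellFoundedLT.induction with
  | _ ξ ih =>
    intro hξ p
    obtain ⟨g, hg0, hgdesc, hgmem⟩ := hP (fun β => {t | β < ξ → RunRealized D q t (β + 1)})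
      (fun β _ => ⟨fun t ht t₁ h hβ => (ht hβ).anti hD h, fun p => by
        by_cases hβ : β < ξ
        · obtain ⟨t, htp, ht⟩ := ih β hβ (hβ.trans hξ) p
          obtain ⟨t', ht't, ht'⟩ := exists_le_runRealized_add_one hD ht
          exact ⟨t', ht't.trans htp, fun _ => ht'⟩
        · exact ⟨p, le_rfl, fun h => absurd h hβ⟩⟩) p
    refine ⟨g ξ, (hgdesc 0 ξ zero_le hξ).trans hg0, fun η hη => ?_⟩
    exact (hgmem η (hη.trans hξ) hη).anti hD (hgdesc η ξ hη.le hξ) η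
      (Order.lt_add_one_iff.2 le_rfl)

theorem openDense_runRealized_add_one {κ : Cardinal.{v}} (hP : StronglyDistrib κ P)
    {α : Ordinal.{v}} (hα : α < κ.ord) : OpenDense {t | RunRealized D q t (α + 1)} := by
  refine ⟨fun t ht t₁ h => RunRealized.anti hD h ht, fun p => ?_⟩
  obtain ⟨t, htp, ht⟩ := exists_le_runRealized hD hP α hα p
  obtain ⟨t', ht't, ht'⟩ := exists_le_runRealized_add_one hD ht
  exact ⟨t', ht't.trans htp, ht'⟩

theorem run_thread_eq {o : Ordinal.{v}} {f : Ordinal.{v} → P}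
    (hdesc : ∀ β α, β ≤ α → α < o → f α ≤ f β)
    (hreal : ∀ α < o, RunRealized D q (f α) (α + 1)) {β α : Ordinal.{v}} (hβα : β < α)
    (hα : α < o) : run D q (f α) β = run D q (f β) β :=
  run_eq_of_le hD (hdesc β α hβα.le hα) (hreal β (hβα.trans hα)) β
    (Order.lt_add_one_iff.2 le_rfl)

theorem run_thread_le_escapeBelow {o : Ordinal.{v}} {f : Ordinal.{v} → P}
    (hdesc : ∀ β α, β ≤ α → α < o → f α ≤ f β)
    (hreal : ∀ α < o, RunRealized D q (f α) (α + 1)) {α : Ordinal.{v}} (hα : α < o) :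
    run D q (f α) α ≤ escapeBelow q ((fun β => run D q (f β) β) '' Iio α) := by
  have himage : run D q (f α) '' Iio α = (fun β => run D q (f β) β) '' Iio α :=
    image_congr fun β hβ => run_thread_eq hD hdesc hreal hβ hα
  exact himage ▸ run_le_escapeBelow hD (f α) α

end Run

theorem openDense_proj_of_cc_stronglyDistrib_general {Q : Type u} {P : Type w}
    [PartialOrder Q] [PartialOrder P] (κ : Cardinal.{u})
    (hcc : ∀ A : Set Q, IsAntichainIncompat A → #A < κ)
    (hP : StronglyDistrib κ P)
    (D : Set (Q × P)) (hD : OpenDense D) (q : Q) :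
    OpenDense {p : P |
      ∃ A : Set Q, MaxAntichainBelow q A ∧ ∀ a ∈ A, (a, p) ∈ D} := by
  refine ⟨fun p ⟨A, hA, hAD⟩ p' hp' => ⟨A, hA, fun a ha => hD.1 _ (hAD a ha) _ ⟨le_rfl, hp'⟩⟩,
    fun p => ?_⟩
  obtain ⟨f, hf0, hdesc, hreal⟩ := hP _ (fun α hα => openDense_runRealized_add_one hD hP hα) p
  set z : Ordinal.{u} → Q := fun α => run D q (f α) α
  have hz : ∀ α < κ.ord, z α ≤ escapeBelow q (z '' Iio α) :=
    fun α hα => run_thread_le_escapeBelow hD hdesc hreal hα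
  by_cases hpre : ∃ η < κ.ord, PredenseBelow q (z '' Iio η)
  · obtain ⟨η, ⟨hη, hηpre⟩, hmin⟩ := wellFounded_lt.has_min _ hpre
    have hnp : ∀ β < η, ¬PredenseBelow q (z '' Iio β) := fun β hβ h => hmin β ⟨hβ.trans hη, h⟩ hβ
    refine ⟨f η, (hdesc 0 η zero_le hη).trans hf0, z '' Iio η,
      maxAntichainBelow_image_of_escapeBelow (fun β hβ => hz β (hβ.trans hη)) hnp hηpre, ?_⟩
    rintro _ ⟨β, hβ, rfl⟩
    exact hD.1 _ (hreal β (hβ.trans hη) β (Order.lt_add_one_iff.2 le_rfl)) _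
      ⟨le_rfl, hdesc β η hβ.le hη⟩
  · push Not at hpre
    have hcard := hcc _ (isAntichainIncompat_image_of_escapeBelow hz hpre)
    rw [mk_image_Iio_ord (injOn_of_escapeBelow hz hpre)] at hcard
    exact (lt_irrefl κ hcard).elim

/-- Lemma (strong Easton lemma, first claim): if `Q` is `κ`-cc, `P` is strongly
`<κ`-distributive, `D ⊆ Q × P` is open dense (in the product order) and `q ∈ Q`, then
the set of all `p ∈ P` for which there is a maximal antichain `A` below `q` in `Q`
with `A × {p} ⊆ D` is open dense in `P`. -/
theorem openDense_proj_of_cc_stronglyDistrib {Q : Type u} {P : Type w}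
    [PartialOrder Q] [PartialOrder P] (κ : Cardinal.{u})
    (hreg : κ.IsRegular)
    (hcc : ∀ A : Set Q, IsAntichainIncompat A → #A < κ)
    (hP : StronglyDistrib κ P)
    (D : Set (Q × P)) (hD : OpenDense D) (q : Q) :
    OpenDense {p : P |
      ∃ A : Set Q, MaxAntichainBelow q A ∧ ∀ a ∈ A, (a, p) ∈ D} :=
  openDense_proj_of_cc_stronglyDistrib_general κ hcc hP D hD q
end

section
/- Let κ be a regular uncountable cardinal. If □_κ fails, then the poset S(κ) (which adds a □_κ-sequence by initial segments) is not strongly <κ⁺-distributive. -/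
universe u v

/-- `β` is a limit point of the set of ordinals `C`: `β > 0` and `C ∩ β` is
unbounded in `β`. -/
def IsLimitPtOrd (C : Set Ordinal.{v}) (β : Ordinal.{v}) : Prop :=
  0 < β ∧ ∀ γ < β, ∃ δ ∈ C, γ < δ ∧ δ < β

/-- `C` is club in the ordinal `α`: a set of ordinals below `α`, unbounded in `α`,
and containing all of its limit points below `α`. -/
def IsClubInOrd (α : Ordinal.{v}) (C : Set Ordinal.{v}) : Prop :=
  (∀ β ∈ C, β < α) ∧
  (∀ β < α, ∃ γ ∈ C, β ≤ γ) ∧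
  (∀ β < α, IsLimitPtOrd C β → β ∈ C)

/-- The order type of a set of ordinals. -/
noncomputable def otpSet (C : Set Ordinal.{v}) : Ordinal.{v + 1} :=
  Ordinal.type (Subrel ((· < ·) : Ordinal.{v} → Ordinal.{v} → Prop) (· ∈ C))

/-- `C` is a `□_κ`-sequence: for every limit ordinal `α < κ⁺`, `C α` is club in `α`
of order type `≤ κ`, and `C α ∩ β = C β` for every limit point `β < α` of `C α`. -/
def SquareSeq (κ : Cardinal.{v}) (C : Ordinal.{v} → Set Ordinal.{v}) : Prop :=
  ∀ α < (Order.succ κ).ord, Order.IsSuccLimit α →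
    IsClubInOrd α (C α) ∧ otpSet (C α) ≤ Ordinal.lift.{v + 1, v} κ.ord ∧
    ∀ β, IsLimitPtOrd (C α) β → β < α → C α ∩ Set.Iio β = C β

/-- A condition in the poset `S(κ)` adding a `□_κ`-sequence by initial segments: a
function whose domain is the set of limit ordinals `≤ bd` (for some limit ordinal
`bd < κ⁺`, and with value `∅` outside the domain), assigning to each limit `α ≤ bd`
a club subset of `α` of order type `≤ κ`, coherently. The order is end-extension. -/
structure SCond (κ : Cardinal.{v}) where
  /-- the largest element of the domain -/
  bd : Ordinal.{v}
  bd_lim : Order.IsSuccLimit bd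
  bd_lt : bd < (Order.succ κ).ord
  /-- the underlying function -/
  f : Ordinal.{v} → Set Ordinal.{v}
  dom_f : ∀ α : Ordinal.{v}, ¬(α ≤ bd ∧ Order.IsSuccLimit α) → f α = ∅
  club_f : ∀ α, α ≤ bd → Order.IsSuccLimit α →
    IsClubInOrd α (f α) ∧ otpSet (f α) ≤ Ordinal.lift.{v + 1, v} κ.ord
  coh_f : ∀ α, α ≤ bd → Order.IsSuccLimit α →
    ∀ β, IsLimitPtOrd (f α) β → β < α → f α ∩ Set.Iio β = f β

/-- The order on `S(κ)`: `q ≤ p` iff `q` end-extends `p`. -/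
instance (κ : Cardinal.{v}) : Preorder (SCond κ) where
  le q p := p.bd ≤ q.bd ∧ ∀ α ≤ p.bd, q.f α = p.f α
  le_refl p := ⟨le_refl _, fun _ _ => rfl⟩
  le_trans a b c hab hbc :=
    ⟨hbc.1.trans hab.1, fun α hα => (hab.2 α (hα.trans hbc.1)).trans (hbc.2 α hα)⟩

/-!
For every `α < κ⁺` the conditions whose domain reaches `α` are dense: extend a given condition
along a descending tower `(Q i)_{i ≤ κ}` with strictly increasing tops which, at successor stages,
pass the members of a `κ`-sequence cofinal in `α`. At a limit stage `j` the union of the earlier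
stages is topped with the club `{(Q m).bd | m < j}`, of order type `j ≤ κ`; its limit points are
the tops of earlier limit stages, each already carrying the matching initial segment, so coherence
is preserved. A thread through these `κ⁺` dense sets glues into a `□_κ`-sequence.
-/

open Cardinal Ordinal Order Set

theorem Ordinal.isSuccLimit_of_pos_of_succ_lt {o : Ordinal} (h0 : 0 < o)
    (h : ∀ a < o, succ a < o) : IsSuccLimit o :=
  Ordinal.isSuccLimit_iff.2 ⟨h0.ne', isSuccPrelimit_of_succ_lt h⟩

theorem IsLimitPtOrd.isSuccLimit {C : Set Ordinal.{v}} {β : Ordinal.{v}} (h : IsLimitPtOrd C β) :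
    IsSuccLimit β :=
  Ordinal.isSuccLimit_of_pos_of_succ_lt h.1 fun a ha =>
    let ⟨_, _, haδ, hδβ⟩ := h.2 a ha
    (succ_le_of_lt haδ).trans_lt hδβ

theorem otpSet_Iio (θ : Ordinal.{v}) : otpSet (Iio θ) = Ordinal.lift.{v + 1} θ :=
  typein_ordinal θ

theorem otpSet_mono {s t : Set Ordinal.{v}} (h : s ⊆ t) : otpSet s ≤ otpSet t :=
  type_le_iff'.2 ⟨(OrderEmbedding.ofStrictMono (inclusion h) fun _ _ hab => hab).ltEmbedding⟩

theorem otpSet_image {s : Set Ordinal.{v}} {g : Ordinal.{v} → Ordinal.{v}} (hg : StrictMonoOn g s) :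
    otpSet (g '' s) = otpSet s :=
  (type_eq.2 ⟨(hg.orderIso g s).toRelIsoLT⟩).symm

theorem le_of_isSuccLimit_of_lt_add_omega0 {c δ : Ordinal.{v}} (hδ : IsSuccLimit δ)
    (h : δ < c + ω) : δ ≤ c := by
  by_contra! hcδ
  rw [← Ordinal.add_sub_cancel_of_le hcδ.le] at h hδ
  rcases Ordinal.isSuccLimit_add_iff.1 hδ with hlim | ⟨h0, -⟩
  · exact (omega0_le_of_isSuccLimit hlim).not_gt (by simpa using h)
  · exact (Ordinal.sub_ne_zero_iff_lt.2 hcδ) h0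

theorem isClubInOrd_Ioo_add_omega0 (c : Ordinal.{v}) : IsClubInOrd (c + ω) (Ioo c (c + ω)) := by
  have hc : c < c + ω := lt_add_of_pos_right c omega0_pos
  refine ⟨fun β hβ => hβ.2, fun β hβ => ?_, fun β hβ hpt => ?_⟩
  · rcases lt_or_ge c β with hcβ | hβc
    · exact ⟨β, ⟨hcβ, hβ⟩, le_rfl⟩
    · exact ⟨succ c, ⟨lt_succ c, (isSuccLimit_add c isSuccLimit_omega0).succ_lt hc⟩,
        hβc.trans (le_succ c)⟩
  · obtain ⟨δ, hδ, -, hδβ⟩ := hpt.2 0 hpt.1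
    exact absurd (le_of_isSuccLimit_of_lt_add_omega0 hpt.isSuccLimit hβ) (hδ.1.trans hδβ).not_ge

theorem otpSet_Ioo_add_omega0_le (c : Ordinal.{v}) :
    otpSet (Ioo c (c + ω)) ≤ Ordinal.lift.{v + 1} (ω : Ordinal.{v}) := by
  have hsub : Ioo c (c + ω) ⊆ (c + ·) '' Iio ω := fun x hx =>
    have hx' := Ordinal.add_sub_cancel_of_le hx.1.le
    ⟨x - c, by rw [mem_Iio, ← add_lt_add_iff_left c, hx']; exact hx.2, hx'⟩
  calc otpSet (Ioo c (c + ω)) ≤ otpSet ((c + ·) '' Iio ω) := otpSet_mono hsub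
    _ = Ordinal.lift.{v + 1} (ω : Ordinal.{v}) := by
      rw [otpSet_image fun _ _ _ _ h => add_lt_add_right h c, otpSet_Iio]

theorem exists_isSuccLimit_eq_of_isLimitPtOrd_image {g : Ordinal.{v} → Ordinal.{v}}
    {j β : Ordinal.{v}} (hg : StrictMonoOn g (Iio j))
    (hcont : ∀ i < j, IsSuccLimit i → ∀ γ < g i, ∃ m < i, γ ≤ g m)
    (hβ : IsLimitPtOrd (g '' Iio j) β) (hβj : ∃ m < j, β ≤ g m) :
    ∃ i < j, IsSuccLimit i ∧ g i = β ∧ g '' Iio j ∩ Iio β = g '' Iio i := by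
  set S := {m | m < j ∧ β ≤ g m}
  obtain ⟨hij, hβi⟩ : sInf S ∈ S := csInf_mem hβj
  set i := sInf S
  have hbelow : ∀ m < j, g m < β ↔ m < i := fun m hm =>
    ⟨fun hgm => lt_of_not_ge fun him => hgm.not_ge (hβi.trans (hg.monotoneOn hij hm him)),
      fun hmi => lt_of_not_ge fun hβm => (csInf_le' (show m ∈ S from ⟨hm, hβm⟩)).not_gt hmi⟩
  have hlim : IsSuccLimit i := by
    obtain ⟨_, ⟨m, hm, rfl⟩, -, hmβ⟩ := hβ.2 0 hβ.1
    refine Ordinal.isSuccLimit_of_pos_of_succ_lt ((hbelow m hm).1 hmβ).pos fun k hki => ?_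
    have hkj := hki.trans hij
    obtain ⟨_, ⟨n, hn, rfl⟩, hkn, hnβ⟩ := hβ.2 (g k) ((hbelow k hkj).2 hki)
    exact (succ_le_of_lt ((hg.lt_iff_lt hkj hn).1 hkn)).trans_lt ((hbelow n hn).1 hnβ)
  have hgi : g i = β := by
    refine le_antisymm (not_lt.1 fun hβgi => ?_) hβi
    obtain ⟨m, hmi, hβm⟩ := hcont i hij hlim β hβgi
    exact ((hbelow m (hmi.trans hij)).2 hmi).not_ge hβm
  refine ⟨i, hij, hlim, hgi, ?_⟩
  ext x
  constructor
  · rintro ⟨⟨m, hm, rfl⟩, hmβ⟩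
    exact ⟨m, (hbelow m hm).1 hmβ, rfl⟩
  · rintro ⟨m, hmi, rfl⟩
    exact ⟨⟨m, hmi.trans hij, rfl⟩, (hbelow m (hmi.trans hij)).2 hmi⟩

theorem exists_surjOn_Iio {α θ : Ordinal.{v}} (hα : 0 < α) (hαθ : α.card ≤ θ.card) :
    ∃ u : Ordinal.{v} → Ordinal.{v}, (∀ i, u i < α) ∧ SurjOn u (Iio θ) (Iio α) := by
  classical
  obtain ⟨e⟩ : #(Iio α) ≤ #(Iio θ) := by
    rw [Cardinal.mk_Iio_ordinal, Cardinal.mk_Iio_ordinal]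
    exact Cardinal.lift_le.2 hαθ
  have : Nonempty (Iio α) := ⟨⟨0, hα⟩⟩
  refine ⟨fun i => if h : i < θ then (Function.invFun ⇑e (⟨i, h⟩ : Iio θ)).1 else 0,
    fun i => ?_, fun β hβ => ⟨e ⟨β, hβ⟩, (e ⟨β, hβ⟩).2, ?_⟩⟩
  · dsimp only
    split_ifs
    exacts [(Function.invFun ⇑e _).2, hα]
  · simp only [Function.leftInverse_invFun e.injective _]
    exact dif_pos (e ⟨β, hβ⟩).2

namespace SCond

variable {κ : Cardinal.{v}}

theorem f_eq_of_le {p q : SCond κ} (h : q ≤ p) {α : Ordinal.{v}} (hα : α ≤ p.bd) :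
    q.f α = p.f α :=
  h.2 α hα

theorem iUnion_f_eq_of_chain {ι : Sort*} {Q : ι → SCond κ} (hQ : ∀ a b, Q a ≤ Q b ∨ Q b ≤ Q a)
    {a : ι} {δ : Ordinal.{v}} (hδ : δ ≤ (Q a).bd) : ⋃ b, (Q b).f δ = (Q a).f δ := by
  refine (iUnion_subset fun b => ?_).antisymm (subset_iUnion (fun b => (Q b).f δ) a)
  rcases hQ a b with hab | hba
  · by_cases hδb : δ ≤ (Q b).bd
    · rw [← f_eq_of_le hab hδb]
    · rw [(Q b).dom_f δ fun h => hδb h.1]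
      exact empty_subset _
  · rw [f_eq_of_le hba hδ]

theorem exists_le_of_chain {ι : Sort*} (Q : ι → SCond κ) (hQ : ∀ a b, Q a ≤ Q b ∨ Q b ≤ Q a)
    {T : Ordinal.{v}} (hT : IsSuccLimit T) (hTκ : T < (succ κ).ord) (hbd : ∀ a, (Q a).bd < T)
    (hcov : ∀ δ < T, IsSuccLimit δ → ∃ a, δ ≤ (Q a).bd) {C : Set Ordinal.{v}}
    (hC : IsClubInOrd T C) (hCκ : otpSet C ≤ Ordinal.lift.{v + 1} κ.ord)
    (hcoh : ∀ β, IsLimitPtOrd C β → β < T → ∃ a, β ≤ (Q a).bd ∧ C ∩ Iio β = (Q a).f β) :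
    ∃ q : SCond κ, (∀ a, q ≤ Q a) ∧ q.bd = T ∧ q.f T = C := by
  classical
  let F : Ordinal.{v} → Set Ordinal.{v} := fun δ => if δ = T then C else ⋃ a, (Q a).f δ
  have hF : ∀ a, ∀ δ ≤ (Q a).bd, F δ = (Q a).f δ := fun a δ hδ => by
    simp only [F, if_neg (hδ.trans_lt (hbd a)).ne, iUnion_f_eq_of_chain hQ hδ]
  refine ⟨⟨T, hT, hTκ, F, fun δ hδ => ?_, fun δ hδT hδ => ?_, fun δ hδT hδ β hβ hβδ => ?_⟩,
    fun a => ⟨(hbd a).le, hF a⟩, rfl, if_pos rfl⟩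
  · have hδT : δ ≠ T := fun h => hδ ⟨h.le, h ▸ hT⟩
    simp only [F, if_neg hδT]
    exact iUnion_eq_empty.2 fun a => (Q a).dom_f δ fun h => hδ ⟨h.1.trans (hbd a).le, h.2⟩
  · rcases hδT.lt_or_eq with hδT | rfl
    · obtain ⟨a, hδa⟩ := hcov δ hδT hδ
      rw [hF a δ hδa]
      exact (Q a).club_f δ hδa hδ
    · simp only [F, if_pos rfl]
      exact ⟨hC, hCκ⟩
  · rcases hδT.lt_or_eq with hδT | rfl
    · obtain ⟨a, hδa⟩ := hcov δ hδT hδ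
      rw [hF a δ hδa] at hβ ⊢
      rw [hF a β (hβδ.le.trans hδa)]
      exact (Q a).coh_f δ hδa hδ β hβ hβδ
    · simp only [F, if_pos rfl] at hβ ⊢
      obtain ⟨a, hβa, hCβ⟩ := hcoh β hβ hβδ
      rw [hCβ, ← hF a β hβa]

theorem exists_le_bd_eq_add_omega0 (hκ : ℵ₀ ≤ κ) {ι : Sort*} (Q : ι → SCond κ)
    (hQ : ∀ a b, Q a ≤ Q b ∨ Q b ≤ Q a) {c : Ordinal.{v}} (hcκ : c < (succ κ).ord)
    (hbd : ∀ a, (Q a).bd ≤ c) (hcov : ∀ δ ≤ c, IsSuccLimit δ → ∃ a, δ ≤ (Q a).bd) :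
    ∃ q : SCond κ, (∀ a, q ≤ Q a) ∧ q.bd = c + ω := by
  have hc : c < c + ω := lt_add_of_pos_right c omega0_pos
  have hωκ : ω < (succ κ).ord := by
    rw [← ord_aleph0, ord_lt_ord]
    exact hκ.trans_lt (lt_succ κ)
  obtain ⟨q, hq, hqbd, -⟩ := exists_le_of_chain Q hQ (isSuccLimit_add c isSuccLimit_omega0)
    (isPrincipal_add_ord (hκ.trans (le_succ κ)) hcκ hωκ) (fun a => (hbd a).trans_lt hc)
    (fun δ hδ hlim => hcov δ (le_of_isSuccLimit_of_lt_add_omega0 hlim hδ) hlim)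
    (isClubInOrd_Ioo_add_omega0 c)
    ((otpSet_Ioo_add_omega0_le c).trans (Ordinal.lift_le.2 (by simpa using ord_le_ord.2 hκ)))
    fun β hβ hβT => ((le_of_isSuccLimit_of_lt_add_omega0 hβ.isSuccLimit hβT).not_gt
      ((isClubInOrd_Ioo_add_omega0 c).2.2 β hβT hβ).1).elim
  exact ⟨q, hq, hqbd⟩

theorem nonempty (hκ : ℵ₀ ≤ κ) : Nonempty (SCond κ) := by
  obtain ⟨q, -⟩ := exists_le_bd_eq_add_omega0 hκ (PEmpty.elim : PEmpty.{1} → SCond κ)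
    (fun a => a.elim) (c := 0) (by simp) (fun a => a.elim)
    (fun _ hδ hlim => (hlim.ne_bot (le_bot_iff.1 hδ)).elim)
  exact ⟨q⟩

theorem exists_le_bd_lt (hκ : ℵ₀ ≤ κ) (r : SCond κ) : ∃ q ≤ r, r.bd < q.bd := by
  obtain ⟨q, hq, hqbd⟩ := exists_le_bd_eq_add_omega0 hκ (fun _ : Unit => r) (fun _ _ => .inl le_rfl)
    r.bd_lt (fun _ => le_rfl) (fun δ hδ _ => ⟨(), hδ⟩)
  exact ⟨q, hq (), hqbd ▸ lt_add_of_pos_right r.bd omega0_pos⟩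

end SCond

section Tower

variable {κ : Cardinal.{v}}

def IsTowerStage (Q : Ordinal.{v} → SCond κ) (i : Ordinal.{v}) : Prop :=
  (∀ m < i, Q i ≤ Q m ∧ (Q m).bd < (Q i).bd) ∧
    (IsSuccLimit i → (Q i).f (Q i).bd = (fun m => (Q m).bd) '' Iio i)

def IsTower (Q : Ordinal.{v} → SCond κ) (j : Ordinal.{v}) : Prop :=
  ∀ i < j, IsTowerStage Q i

theorem IsTower.le_of_le {Q : Ordinal.{v} → SCond κ} {j : Ordinal.{v}} (hQ : IsTower Q j)
    {m i : Ordinal.{v}} (hmi : m ≤ i) (hij : i < j) : Q i ≤ Q m := by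
  rcases hmi.eq_or_lt with rfl | hmi
  · exact le_rfl
  · exact ((hQ i hij).1 m hmi).1

theorem IsTower.exists_le_bd {Q : Ordinal.{v} → SCond κ} {j : Ordinal.{v}} (hQ : IsTower Q j)
    {i : Ordinal.{v}} (hij : i < j) (hi : IsSuccLimit i) {γ : Ordinal.{v}} (hγ : γ < (Q i).bd) :
    ∃ m < i, γ ≤ (Q m).bd := by
  have hclub := ((Q i).club_f _ le_rfl (Q i).bd_lim).1
  rw [(hQ i hij).2 hi] at hclub
  obtain ⟨_, ⟨m, hm, rfl⟩, hγm⟩ := hclub.2.1 γ hγ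
  exact ⟨m, hm, hγm⟩

theorem IsTower.exists_le (hκ : ℵ₀ ≤ κ) {Q : Ordinal.{v} → SCond κ} {j : Ordinal.{v}}
    (hQ : IsTower Q j) (hj : IsSuccLimit j) (hjκ : j ≤ κ.ord) :
    ∃ q : SCond κ, (∀ m < j, q ≤ Q m) ∧ q.f q.bd = (fun m => (Q m).bd) '' Iio j := by
  set g : Ordinal.{v} → Ordinal.{v} := fun m => (Q m).bd
  have hg : StrictMonoOn g (Iio j) := fun m _ i hi hmi => ((hQ i hi).1 m hmi).2
  set T := ⨆ m : Iio j, g m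
  have hgT : ∀ m < j, g m < T := fun m hm =>
    (hg hm (hj.succ_lt hm) (lt_succ m)).trans_le
      (Ordinal.le_iSup (fun m : Iio j => g m) ⟨succ m, hj.succ_lt hm⟩)
  have hltT : ∀ δ < T, ∃ m < j, δ < g m := fun δ hδ => by
    obtain ⟨⟨m, hm⟩, h⟩ := Ordinal.lt_iSup_iff.1 hδ
    exact ⟨m, hm, h⟩
  have hT : IsSuccLimit T := Ordinal.isSuccLimit_of_pos_of_succ_lt (hgT 0 hj.bot_lt).pos
    fun a ha => let ⟨m, hm, ham⟩ := hltT a ha; (succ_le_of_lt ham).trans_lt (hgT m hm)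
  have hTκ : T < (succ κ).ord := by
    refine Ordinal.lift_iSup_lt_of_lt_cof ?_ fun m => (Q m).bd_lt
    rw [Cardinal.mk_Iio_ordinal, Cardinal.lift_lift, ← lift_cof, (isRegular_succ hκ).cof_ord,
      Cardinal.lift_lt, Order.lt_succ_iff]
    simpa using card_le_card hjκ
  have hlimpt : ∀ β, IsLimitPtOrd (g '' Iio j) β → β < T →
      ∃ i < j, IsSuccLimit i ∧ g i = β ∧ g '' Iio j ∩ Iio β = g '' Iio i := fun β hβ hβT =>
    exists_isSuccLimit_eq_of_isLimitPtOrd_image hg (fun i hij hi _ => hQ.exists_le_bd hij hi) hβ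
      (let ⟨m, hm, hβm⟩ := hltT β hβT; ⟨m, hm, hβm.le⟩)
  obtain ⟨q, hq, hqT, hqf⟩ := SCond.exists_le_of_chain (fun m : Iio j => Q m)
    (fun m i => (le_total i.1 m.1).imp (hQ.le_of_le · m.2) (hQ.le_of_le · i.2))
    hT hTκ (fun m => hgT m m.2)
    (fun δ hδ _ => let ⟨m, hm, hδm⟩ := hltT δ hδ; ⟨⟨m, hm⟩, hδm.le⟩)
    (C := g '' Iio j)
    ⟨fun _ ⟨m, hm, hmβ⟩ => hmβ ▸ hgT m hm,
      fun β hβ => let ⟨m, hm, hβm⟩ := hltT β hβ; ⟨g m, ⟨m, hm, rfl⟩, hβm.le⟩,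
      fun β hβT hβ => let ⟨i, hij, _, hiβ, _⟩ := hlimpt β hβ hβT; ⟨i, hij, hiβ⟩⟩
    (by rw [otpSet_image hg, otpSet_Iio]; exact Ordinal.lift_le.2 hjκ)
    (fun β hβ hβT => by
      obtain ⟨i, hij, hi, hiβ, hCβ⟩ := hlimpt β hβ hβT
      refine ⟨⟨i, hij⟩, hiβ.ge, ?_⟩
      rw [hCβ, ← (hQ i hij).2 hi, ← hiβ])
  exact ⟨q, fun m hm => hq ⟨m, hm⟩, hqT ▸ hqf⟩

theorem exists_isTower (hκ : ℵ₀ ≤ κ) (p : SCond κ) (next : Ordinal.{v} → SCond κ → SCond κ)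
    (hnext : ∀ i r, next i r ≤ r ∧ r.bd < (next i r).bd) :
    ∃ Q : Ordinal.{v} → SCond κ,
      Q 0 = p ∧ (∀ i, Q (succ i) = next i (Q i)) ∧ IsTower Q (succ κ.ord) := by
  classical
  -- the default `p` at limit stages never occurs, by `IsTower.exists_le`
  let Q : Ordinal.{v} → SCond κ := fun i => Ordinal.limitRecOn i p next fun j _ G =>
    if h : ∃ q : SCond κ, (∀ m hm, q ≤ G m hm) ∧ q.f q.bd = {x | ∃ m hm, (G m hm).bd = x}
    then h.choose else p
  have hQsucc : ∀ i, Q (succ i) = next i (Q i) := fun i => Ordinal.limitRecOn_add_one ..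
  have hQlim : ∀ j, IsSuccLimit j →
      (∃ q : SCond κ, (∀ m < j, q ≤ Q m) ∧ q.f q.bd = (fun m => (Q m).bd) '' Iio j) →
      (∀ m < j, Q j ≤ Q m) ∧ (Q j).f (Q j).bd = (fun m => (Q m).bd) '' Iio j := by
    intro j hj h
    have himage : (fun m => (Q m).bd) '' Iio j = {x | ∃ m, ∃ hm : m < j, (Q m).bd = x} := by
      ext; simp
    rw [himage] at h ⊢
    have hQj : Q j = if h : ∃ q : SCond κ, (∀ m < j, q ≤ Q m) ∧
        q.f q.bd = {x | ∃ m, ∃ hm : m < j, (Q m).bd = x} then h.choose else p :=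
      Ordinal.limitRecOn_limit _ _ _ _ hj
    rw [hQj, dif_pos h]
    exact h.choose_spec
  refine ⟨Q, Ordinal.limitRecOn_zero .., hQsucc, fun i hi => ?_⟩
  induction i using WellFoundedLT.induction with | _ i IH =>
  have hQi : IsTower Q i := fun m hm => IH m hm (hm.trans hi)
  rcases Ordinal.zero_or_succ_or_isSuccLimit i with rfl | ⟨k, rfl⟩ | hlim
  · exact ⟨fun m hm => (zero_le.not_gt hm).elim, fun h => (not_isSuccLimit_zero h).elim⟩
  · refine ⟨fun m hm => ?_, fun h => (not_isSuccLimit_succ k h).elim⟩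
    have hQkm := hQi.le_of_le (lt_succ_iff.1 hm) (lt_succ k)
    rw [hQsucc]
    exact ⟨(hnext k (Q k)).1.trans hQkm, hQkm.1.trans_lt (hnext k (Q k)).2⟩
  · obtain ⟨hle, htop⟩ := hQlim i hlim (hQi.exists_le hκ hlim (lt_succ_iff.1 hi))
    refine ⟨fun m hm => ⟨hle m hm, ?_⟩, fun _ => htop⟩
    exact ((hQi (succ m) (hlim.succ_lt hm)).1 m (lt_succ m)).2.trans_le (hle _ (hlim.succ_lt hm)).1

end Tower

namespace SCond

variable {κ : Cardinal.{v}}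

theorem exists_le_le_bd (hκ : ℵ₀ ≤ κ) {α : Ordinal.{v}} (hα : α < (succ κ).ord) (p : SCond κ) :
    ∃ q ≤ p, α ≤ q.bd := by
  induction α using WellFoundedLT.induction generalizing p with | _ α IH =>
  rcases eq_zero_or_pos α with rfl | hαpos
  · exact ⟨p, le_rfl, zero_le⟩
  have hnext : ∀ β < α, ∀ r : SCond κ, ∃ q ≤ r, β ≤ q.bd ∧ r.bd < q.bd := fun β hβ r => by
    obtain ⟨r', hr', hβr'⟩ := IH β hβ (hβ.trans hα) r
    obtain ⟨q, hq, hbd⟩ := exists_le_bd_lt hκ r'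
    exact ⟨q, hq.trans hr', hβr'.trans hbd.le, hr'.1.trans_lt hbd⟩
  -- the tower of length `κ` passes every `β < α` at some successor stage
  obtain ⟨u, huα, hu⟩ := exists_surjOn_Iio (θ := κ.ord) hαpos
    (by simpa using lt_succ_iff.1 (lt_ord.1 hα))
  choose next hnext_le hnext_ge hnext_lt using fun i => hnext (u i) (huα i)
  obtain ⟨Q, hQ0, hQsucc, hQ⟩ :=
    exists_isTower hκ p next fun i r => ⟨hnext_le i r, hnext_lt i r⟩
  refine ⟨Q κ.ord, hQ0 ▸ hQ.le_of_le zero_le (lt_succ _), not_lt.1 fun hlt => ?_⟩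
  obtain ⟨i, hi, hui⟩ := hu hlt
  have hsucc := ((hQ κ.ord (lt_succ _)).1 (succ i) ((isSuccLimit_ord hκ).succ_lt hi)).2
  rw [hQsucc] at hsucc
  exact (hnext_ge i (Q i)).not_gt (hui ▸ hsucc)

theorem openDense_setOf_le_bd (hκ : ℵ₀ ≤ κ) {α : Ordinal.{v}} (hα : α < (succ κ).ord) :
    OpenDense {p : SCond κ | α ≤ p.bd} :=
  ⟨fun _ hp _ hq => hp.trans hq.1, fun p => exists_le_le_bd hκ hα p⟩

end SCond

theorem squareSeq_of_thread {κ : Cardinal.{v}} {f : Ordinal.{v} → SCond κ}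
    (hdesc : ∀ β α, β ≤ α → α < (succ κ).ord → f α ≤ f β)
    (hmem : ∀ α < (succ κ).ord, α ≤ (f α).bd) : SquareSeq κ fun β => (f β).f β := by
  intro α hα hlim
  obtain ⟨hclub, hotp⟩ := (f α).club_f α (hmem α hα) hlim
  refine ⟨hclub, hotp, fun β hβ hβα => ?_⟩
  rw [(f α).coh_f α (hmem α hα) hlim β hβ hβα,
    SCond.f_eq_of_le (hdesc β α hβα.le hα) (hmem β (hβα.trans hα))]

theorem scond_not_stronglyDistrib_general (κ : Cardinal.{v})
    (hunc : Cardinal.aleph0 < κ)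
    (hsq : ¬ ∃ C : Ordinal.{v} → Set Ordinal.{v}, SquareSeq κ C) :
    ¬ StronglyDistrib (Order.succ κ) (SCond κ) := by
  intro hSD
  obtain ⟨p⟩ := SCond.nonempty hunc.le
  obtain ⟨f, -, hdesc, hmem⟩ := hSD (fun α => {p : SCond κ | α ≤ p.bd})
    (fun α hα => SCond.openDense_setOf_le_bd hunc.le hα) p
  exact hsq ⟨_, squareSeq_of_thread hdesc hmem⟩

/-- If `□_κ` fails, then the poset `S(κ)` adding a `□_κ`-sequence by initial segments
is not strongly `<κ⁺`-distributive. -/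
theorem scond_not_stronglyDistrib (κ : Cardinal.{v}) (hreg : κ.IsRegular)
    (hunc : Cardinal.aleph0 < κ)
    (hsq : ¬ ∃ C : Ordinal.{v} → Set Ordinal.{v}, SquareSeq κ C) :
    ¬ StronglyDistrib (Order.succ κ) (SCond κ) :=
  scond_not_stronglyDistrib_general κ hunc hsq
end
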